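/- arXiv:1301.3035 — 8 statements merged into one kernel-verified Lean document; each statement's English description precedes it below -/
import Mathlib

section
/- Fix natural numbers k ≥ 1 and n ≥ 1. Let P be the set of pairs (b, a) of functions b, a : Fin k → Fin (n+1) such that both b and a are weakly increasing (monotone) and b i < a i for every i : Fin k. Then (k+1) · |P| = C(n+k, k) · C(n+k-1, k), i.e. the number of parallelogram polyominoes of width k+1 and height n equals (1/(k+1))·C(n+k,k)·C(n+k-1,k). -/
/-!
Encode the lower path by `b i + i` and the upper path by `a i + i - 1`. These are increasing
sequences, that is `k`-subsets of `[0, n + k)` and of `[0, n + k - 1)`, and `b < a` says that the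
first lies weakly below the second. Among all `C(n+k, k) C(n+k-1, k)` pairs of such subsets, those
in which the second sequence drops below the first correspond, by exchanging the tails at the
first such index (Gessel–Viennot path switching), to pairs of a `(k+1)`-subset of `[0, n + k)`
and a `(k-1)`-subset of `[0, n + k - 1)`. So the count is
`C(n+k, k) C(n+k-1, k) - C(n+k, k+1) C(n+k-1, k-1)`, which is `C(n+k, k) C(n+k-1, k) / (k+1)`.
-/

namespace ParallelogramPolyomino

/-- A `k`-subset of `[0, m)` listed increasingly and continued by `m, m + 1, …`, so that
exchanging tails of two such sequences again gives sequences of this form. -/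
def incSeqs (k m : ℕ) : Set (ℕ → ℕ) := {f | StrictMono f ∧ ∀ t, f (k + t) = m + t}

section IncSeqs

variable {k m : ℕ} {f : ℕ → ℕ}

theorem lt_of_mem_incSeqs (hf : f ∈ incSeqs k m) {i : ℕ} (hi : i < k) : f i < m := by
  simpa using (hf.1 hi).trans_eq (hf.2 0)

variable (k m) in
def incSeqsEquivOrderEmbedding : incSeqs k m ≃ (Fin k ↪o Fin m) where
  toFun f := OrderEmbedding.ofStrictMono (fun i ↦ ⟨f.1 i, lt_of_mem_incSeqs f.2 i.2⟩)
    fun _ _ h ↦ f.2.1 h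
  invFun e := by
    refine ⟨fun i ↦ if h : i < k then e ⟨i, h⟩ else m + (i - k), ?_, fun t ↦ by simp⟩
    refine strictMono_nat_of_lt_succ fun i ↦ ?_
    split_ifs with h₁ h₂ h₂
    · exact e.strictMono (Fin.mk_lt_mk.2 i.lt_add_one)
    · have := (e ⟨i, h₁⟩).isLt; omega
    · omega
    · omega
  left_inv f := by
    ext i
    dsimp only
    split_ifs with h
    · rfl
    · obtain ⟨t, rfl⟩ := Nat.exists_eq_add_of_le (not_lt.1 h)
      simp [f.2.2 t]
  right_inv e := by ext; simp

instance : Finite (incSeqs k m) := .of_equiv _ (incSeqsEquivOrderEmbedding k m).symm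

theorem card_incSeqs : Nat.card (incSeqs k m) = m.choose k := by
  rw [Nat.card_congr ((incSeqsEquivOrderEmbedding k m).trans Set.powersetCard.ofFinEmbEquiv),
    Set.powersetCard.card, Nat.card_fin]

end IncSeqs

def spliceUp (f g : ℕ → ℕ) (j : ℕ) : ℕ → ℕ := fun i ↦ if i ≤ j then f i else g (i - 1)

def spliceDown (f g : ℕ → ℕ) (j : ℕ) : ℕ → ℕ := fun i ↦ if i < j then f i else g (i + 1)

section Splice

variable {f g : ℕ → ℕ} {j k : ℕ}

theorem spliceDown_spliceDown_spliceUp (f g : ℕ → ℕ) (j : ℕ) :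
    spliceDown (spliceDown f g j) (spliceUp g f j) j = f := by
  funext i
  simp only [spliceDown, spliceUp]
  split_ifs <;> first | rfl | omega

theorem spliceUp_spliceUp_spliceDown (f g : ℕ → ℕ) (j : ℕ) :
    spliceUp (spliceUp g f j) (spliceDown f g j) j = g := by
  funext i
  simp only [spliceDown, spliceUp]
  split_ifs <;> first | rfl | omega | congr 1; omega

theorem strictMono_spliceUp (hf : StrictMono f) (hg : StrictMono g) (hj : f j < g j) :
    StrictMono (spliceUp f g j) := by
  refine strictMono_nat_of_lt_succ fun i ↦ ?_
  simp only [spliceUp]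
  split_ifs with h₁ h₂ h₂
  · exact hf i.lt_add_one
  · obtain rfl : i = j := by omega
    simpa using hj
  · omega
  · exact hg (by omega)

theorem strictMono_spliceDown (hf : StrictMono f) (hg : StrictMono g) (hfg : ∀ i < j, f i ≤ g i) :
    StrictMono (spliceDown f g j) := by
  refine strictMono_nat_of_lt_succ fun i ↦ ?_
  simp only [spliceDown]
  split_ifs with h₁ h₂ h₂
  · exact hf i.lt_add_one
  · exact (hfg i h₁).trans_lt (hg (by omega))
  · omega
  · exact hg (by omega)

theorem spliceUp_add (hj : j ≤ k) (t : ℕ) : spliceUp f g j (k + 1 + t) = g (k + t) := by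
  simp only [spliceUp]
  rw [if_neg (by omega)]
  congr 1; omega

theorem spliceDown_add (hj : j ≤ k) (t : ℕ) : spliceDown f g j (k + t) = g (k + 1 + t) := by
  simp only [spliceDown]
  rw [if_neg (by omega)]
  congr 1; omega

end Splice

def crossings (p : (ℕ → ℕ) × (ℕ → ℕ)) : Set ℕ := {i | p.2 i < p.1 i}

def swapAt (p : (ℕ → ℕ) × (ℕ → ℕ)) (j : ℕ) : (ℕ → ℕ) × (ℕ → ℕ) :=
  (spliceDown p.1 p.2 j, spliceUp p.2 p.1 j)

/-- Path switching at the first crossing. -/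
noncomputable def crossSwap (p : (ℕ → ℕ) × (ℕ → ℕ)) : (ℕ → ℕ) × (ℕ → ℕ) :=
  swapAt p (sInf (crossings p))

section CrossSwap

variable {p : (ℕ → ℕ) × (ℕ → ℕ)} {j : ℕ}

theorem swapAt_swapAt (p : (ℕ → ℕ) × (ℕ → ℕ)) (j : ℕ) : swapAt (swapAt p j) j = p :=
  Prod.ext (spliceDown_spliceDown_spliceUp _ _ _) (spliceUp_spliceUp_spliceDown _ _ _)

theorem isLeast_crossings_swapAt (hp : IsLeast (crossings p) j) (h₂ : StrictMono p.2) :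
    IsLeast (crossings (swapAt p j)) j := by
  refine ⟨?_, fun i hi ↦ not_lt.1 fun hij ↦ ?_⟩
  · simpa [crossings, swapAt, spliceUp, spliceDown] using h₂ j.lt_add_one
  · have : i ∈ crossings p := by
      simpa [crossings, swapAt, spliceUp, spliceDown, hij, hij.le] using hi
    exact (hp.2 this).not_gt hij

theorem isLeast_sInf_crossings (hp : (crossings p).Nonempty) :
    IsLeast (crossings p) (sInf (crossings p)) :=
  ⟨Nat.sInf_mem hp, fun _ ↦ Nat.sInf_le⟩

theorem crossSwap_eq_swapAt (hp : IsLeast (crossings p) j) : crossSwap p = swapAt p j := by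
  rw [crossSwap, hp.csInf_eq]

theorem crossSwap_crossSwap (hp : (crossings p).Nonempty) (h₂ : StrictMono p.2) :
    crossSwap (crossSwap p) = p := by
  have hj := isLeast_sInf_crossings hp
  rw [crossSwap_eq_swapAt hj, crossSwap_eq_swapAt (isLeast_crossings_swapAt hj h₂), swapAt_swapAt]

end CrossSwap

section Reflection

variable {k m : ℕ} {f g : ℕ → ℕ}

theorem crossings_nonempty_of_not_le (h : ¬ ∀ i < k, f i ≤ g i) : (crossings (f, g)).Nonempty := by
  push Not at h
  obtain ⟨i, -, hi⟩ := h
  exact ⟨i, hi⟩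

theorem mem_crossings_of_mem_incSeqs (hf : f ∈ incSeqs k m) (hg : g ∈ incSeqs (k + 2) (m + 1)) :
    k ∈ crossings (f, g) := by
  have h₁ := hg.1 (lt_add_one k)
  have h₂ := (hg.1 (lt_add_one (k + 1))).trans_eq (hg.2 0)
  have h₃ := hf.2 0
  simp only [add_zero] at h₂ h₃
  show g k < f k
  omega

theorem crossSwap_mem_of_not_le (hf : f ∈ incSeqs (k + 1) (m + 1)) (hg : g ∈ incSeqs (k + 1) m)
    (hfg : ¬ ∀ i < k + 1, f i ≤ g i) :
    (crossSwap (f, g)).1 ∈ incSeqs k m ∧ (crossSwap (f, g)).2 ∈ incSeqs (k + 2) (m + 1) := by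
  have hj := isLeast_sInf_crossings (crossings_nonempty_of_not_le hfg)
  set j := sInf (crossings (f, g))
  have hjk : j ≤ k := by
    push Not at hfg
    obtain ⟨i, hik, hi⟩ := hfg
    exact (hj.2 hi).trans (Nat.le_of_lt_succ hik)
  rw [crossSwap_eq_swapAt hj]
  refine ⟨⟨strictMono_spliceDown hf.1 hg.1 fun i hi ↦ not_lt.1 fun h ↦ (hj.2 h).not_gt hi,
    fun t ↦ ?_⟩, ⟨strictMono_spliceUp hg.1 hf.1 hj.1, fun t ↦ ?_⟩⟩
  · dsimp only [swapAt]
    rw [spliceDown_add hjk, hg.2]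
  · dsimp only [swapAt]
    rw [show k + 2 + t = k + 1 + 1 + t by ring, spliceUp_add (by omega), hf.2]

theorem crossSwap_mem_of_mem_incSeqs (hf : f ∈ incSeqs k m) (hg : g ∈ incSeqs (k + 2) (m + 1)) :
    (crossSwap (f, g)).1 ∈ incSeqs (k + 1) (m + 1) ∧ (crossSwap (f, g)).2 ∈ incSeqs (k + 1) m ∧
      ¬ ∀ i < k + 1, (crossSwap (f, g)).1 i ≤ (crossSwap (f, g)).2 i := by
  have hk := mem_crossings_of_mem_incSeqs hf hg
  have hj := isLeast_sInf_crossings ⟨k, hk⟩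
  set j := sInf (crossings (f, g))
  have hjk : j ≤ k := hj.2 hk
  have hj' := isLeast_crossings_swapAt hj hg.1
  rw [crossSwap_eq_swapAt hj]
  refine ⟨⟨strictMono_spliceDown hf.1 hg.1 fun i hi ↦ not_lt.1 fun h ↦ (hj.2 h).not_gt hi,
    fun t ↦ ?_⟩, ⟨strictMono_spliceUp hg.1 hf.1 hj.1, fun t ↦ ?_⟩,
    fun h ↦ (h j (by omega)).not_gt hj'.1⟩
  · dsimp only [swapAt]
    rw [spliceDown_add (by omega), hg.2]
  · dsimp only [swapAt]
    rw [spliceUp_add hjk, hf.2]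

variable (k m) in
noncomputable def crossingEquiv :
    {p : incSeqs (k + 1) (m + 1) × incSeqs (k + 1) m // ¬ ∀ i < k + 1, p.1.1 i ≤ p.2.1 i} ≃
      incSeqs k m × incSeqs (k + 2) (m + 1) where
  toFun p :=
    have h := crossSwap_mem_of_not_le p.1.1.2 p.1.2.2 p.2
    (⟨_, h.1⟩, ⟨_, h.2⟩)
  invFun q :=
    have h := crossSwap_mem_of_mem_incSeqs q.1.2 q.2.2
    ⟨(⟨_, h.1⟩, ⟨_, h.2.1⟩), h.2.2⟩
  left_inv p := by
    have h := crossSwap_crossSwap (crossings_nonempty_of_not_le p.2) p.1.2.2.1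
    exact Subtype.ext (Prod.ext (Subtype.ext congr($h.1)) (Subtype.ext congr($h.2)))
  right_inv q := by
    have h := crossSwap_crossSwap ⟨k, mem_crossings_of_mem_incSeqs q.1.2 q.2.2⟩ q.2.2.1
    exact Prod.ext (Subtype.ext congr($h.1)) (Subtype.ext congr($h.2))

end Reflection

abbrev NonCrossing (k m : ℕ) : Type :=
  {p : incSeqs k (m + 1) × incSeqs k m // ∀ i < k, p.1.1 i ≤ p.2.1 i}

theorem card_nonCrossing_add (k m : ℕ) :
    Nat.card (NonCrossing (k + 1) m) + m.choose k * (m + 1).choose (k + 2) =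
      (m + 1).choose (k + 1) * m.choose (k + 1) := by
  have h := Nat.card_congr
    (Equiv.sumCompl fun p : incSeqs (k + 1) (m + 1) × incSeqs (k + 1) m ↦
      ∀ i < k + 1, p.1.1 i ≤ p.2.1 i)
  rwa [Nat.card_sum, Nat.card_congr (crossingEquiv k m), Nat.card_prod, Nat.card_prod,
    card_incSeqs, card_incSeqs, card_incSeqs, card_incSeqs] at h

theorem add_two_mul_choose_mul_choose (m k : ℕ) :
    (k + 2) * (m.choose k * (m + 1).choose (k + 2)) =
      (k + 1) * ((m + 1).choose (k + 1) * m.choose (k + 1)) := by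
  have h₁ := Nat.choose_succ_right_eq (m + 1) (k + 1)
  have h₂ := Nat.choose_succ_right_eq m k
  rw [Nat.add_sub_add_right] at h₁
  calc (k + 2) * (m.choose k * (m + 1).choose (k + 2))
      = (m + 1).choose (k + 2) * (k + 1 + 1) * m.choose k := by ring
    _ = (m + 1).choose (k + 1) * (m.choose k * (m - k)) := by rw [h₁]; ring
    _ = (k + 1) * ((m + 1).choose (k + 1) * m.choose (k + 1)) := by rw [← h₂]; ring

theorem card_nonCrossing (k m : ℕ) :
    (k + 2) * Nat.card (NonCrossing (k + 1) m) = (m + 1).choose (k + 1) * m.choose (k + 1) := by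
  have h₁ := card_nonCrossing_add k m
  have h₂ := add_two_mul_choose_mul_choose m k
  zify at h₁ h₂ ⊢
  linear_combination (k + 2 : ℤ) * h₁ - h₂

theorem add_sub_le_of_strictMono {f : ℕ → ℕ} (hf : StrictMono f) {i j : ℕ} (hij : i ≤ j) :
    f i + (j - i) ≤ f j := by
  have h := hf.add_le_nat (j - i) i
  rwa [Nat.sub_add_cancel hij, add_comm] at h

def monotoneEquivIncSeqs (k N : ℕ) :
    {f : Fin k → Fin (N + 1) // Monotone f} ≃ incSeqs k (k + N) where
  toFun f := by
    refine ⟨fun i ↦ if h : i < k then f.1 ⟨i, h⟩ + i else N + i, ?_,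
      fun t ↦ by dsimp only; rw [dif_neg (by omega)]; ring⟩
    refine strictMono_nat_of_lt_succ fun i ↦ ?_
    split_ifs with h₁ h₂ h₂
    · have : f.1 ⟨i, h₁⟩ ≤ f.1 ⟨i + 1, h₂⟩ := f.2 (Fin.mk_le_mk.2 i.le_succ)
      rw [Fin.le_def] at this
      omega
    · have := (f.1 ⟨i, h₁⟩).isLt; omega
    · omega
    · omega
  invFun F := by
    refine ⟨fun i ↦ ⟨F.1 i - i, ?_⟩, fun i j hij ↦ ?_⟩
    · have := add_sub_le_of_strictMono F.2.1 i.2.le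
      have := F.2.2 0
      simp only [add_zero] at this
      omega
    · have := add_sub_le_of_strictMono F.2.1 hij
      rw [Fin.mk_le_mk]
      omega
  left_inv f := by ext i; simp
  right_inv F := by
    ext i
    dsimp only
    split_ifs with h
    · have := F.2.1.le_apply (x := i); omega
    · obtain ⟨t, rfl⟩ := Nat.exists_eq_add_of_le (not_lt.1 h)
      rw [F.2.2 t]; ring

def predUpperEquiv (k N : ℕ) :
    {p : (Fin k → Fin (N + 2)) × (Fin k → Fin (N + 2)) //
        Monotone p.1 ∧ Monotone p.2 ∧ ∀ i, p.1 i < p.2 i} ≃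
      {q : {b : Fin k → Fin (N + 2) // Monotone b} × {a : Fin k → Fin (N + 1) // Monotone a} //
        ∀ i, q.1.1 i ≤ (q.2.1 i).castSucc} where
  toFun p :=
    have ha : ∀ i, p.1.2 i ≠ 0 := fun i ↦ ((Fin.zero_le _).trans_lt (p.2.2.2 i)).ne'
    ⟨(⟨p.1.1, p.2.1⟩, ⟨fun i ↦ (p.1.2 i).pred (ha i),
      fun _ _ h ↦ Fin.pred_le_pred_iff.2 (p.2.2.1 h)⟩),
      fun i ↦ (Fin.le_castSucc_pred_iff (ha i)).2 (p.2.2.2 i)⟩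
  invFun q := ⟨(q.1.1.1, fun i ↦ (q.1.2.1 i).succ),
    q.1.1.2, fun _ _ h ↦ Fin.succ_le_succ_iff.2 (q.1.2.2 h), fun i ↦ Fin.le_castSucc_iff.1 (q.2 i)⟩
  left_inv p := by ext i <;> simp
  right_inv q := by ext i <;> simp

def polyominoEquivNonCrossing (k N : ℕ) :
    {p : (Fin k → Fin (N + 2)) × (Fin k → Fin (N + 2)) //
        Monotone p.1 ∧ Monotone p.2 ∧ ∀ i, p.1 i < p.2 i} ≃ NonCrossing k (k + N) :=
  (predUpperEquiv k N).trans <|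
    Equiv.subtypeEquiv ((monotoneEquivIncSeqs k (N + 1)).prodCongr (monotoneEquivIncSeqs k N))
      fun q ↦ by
        rw [Fin.forall_iff]
        exact forall₂_congr fun i hi ↦ by simp [monotoneEquivIncSeqs, hi, Fin.le_def]

end ParallelogramPolyomino

/-- The number of parallelogram polyominoes of width `k+1` and height `n`,
encoded as pairs `(b, a)` of weakly increasing functions `Fin k → Fin (n+1)`
with `b i < a i`, satisfies `(k+1) * |P| = C(n+k, k) * C(n+k-1, k)`. -/
theorem stmt0 (k n : ℕ) (hk : 1 ≤ k) (hn : 1 ≤ n) :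
    (k + 1) * Nat.card {p : (Fin k → Fin (n + 1)) × (Fin k → Fin (n + 1)) //
        Monotone p.1 ∧ Monotone p.2 ∧ ∀ i, p.1 i < p.2 i} =
      Nat.choose (n + k) k * Nat.choose (n + k - 1) k := by
  obtain ⟨k, rfl⟩ := Nat.exists_eq_add_of_le' hk
  obtain ⟨n, rfl⟩ := Nat.exists_eq_add_of_le' hn
  have h := ParallelogramPolyomino.card_nonCrossing k (k + 1 + n)
  rw [← Nat.card_congr (ParallelogramPolyomino.polyominoEquivNonCrossing (k + 1) n)] at h
  convert h using 3 <;> omega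
end

section
/- Fix natural numbers k ≥ 1 and n ≥ 1. Let P be the set of pairs (b, a) of functions b, a : Fin k → Fin (n+1) such that both b and a are weakly increasing (monotone) and b i < a i for every i : Fin k. Then |P| = C(n+k, k)² − C(n+k+1, k+1) · C(n+k-1, k-1). -/
/-!
Pad a monotone map `Fin m → Fin (n + 1)` to a monotone sequence `ℕ → ℕ` that is constantly `n`
from index `m` on; there are `C(n + m, m)` such sequences (stars and bars, `f ↦ (i ↦ f i + i)`).
Of the `C(n + k, k)²` pairs `(b, a)` of them with `m = k`, the bad ones have a first index
`c < k` with `a c ≤ b c`. Swapping tails there, as in Lindström–Gessel–Viennot, gives the lower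
sequence `b` before `c` followed by `a` shifted one step left, and the upper sequence `a` up to
`c` followed by `b` shifted one step right: a pair with `m = k - 1` and `m = k + 1`. The first
crossing of the new pair is again `c`, so the same swap undoes it, and the bad pairs number
`C(n + k - 1, k - 1) · C(n + k + 1, k + 1)`.
-/

open Set

lemma Fin.add_sub_le_of_strictMono {m : ℕ} {g : Fin m → ℕ} (hg : StrictMono g) {i j : Fin m}
    (hij : i ≤ j) : g i + (j - i) ≤ g j := by
  obtain ⟨i, hi⟩ := i
  obtain ⟨j, hj⟩ := j
  simp only [Fin.mk_le_mk] at hij ⊢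
  induction j, hij using Nat.le_induction with
  | base => simp
  | succ j hij ih =>
    have hstep := hg (show (⟨j, by omega⟩ : Fin m) < ⟨j + 1, hj⟩ from Fin.mk_lt_mk.2 j.lt_succ_self)
    have := ih (by omega)
    omega

def monotoneEquivOrderEmbedding (m n : ℕ) :
    {f : Fin m → Fin (n + 1) // Monotone f} ≃ (Fin m ↪o Fin (n + m)) where
  toFun f := OrderEmbedding.ofStrictMono (fun i => ⟨f.1 i + i, by omega⟩) fun i j hij => by
    have := f.2 hij.le
    simp only [Fin.lt_def, Fin.le_def] at hij this ⊢
    omega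
  invFun g := ⟨fun i => ⟨g i - i, by
      have := i.isLt
      have hlast := Fin.add_sub_le_of_strictMono (Fin.val_strictMono.comp g.strictMono)
        (show i ≤ ⟨m - 1, by omega⟩ from Fin.le_def.2 (by simp; omega))
      simp only [Function.comp] at hlast
      omega⟩, fun i j hij => by
    have := Fin.add_sub_le_of_strictMono (Fin.val_strictMono.comp g.strictMono) hij
    simp only [Function.comp, Fin.le_def] at this hij ⊢
    omega⟩
  left_inv f := by ext i; exact Nat.add_sub_cancel ..
  right_inv g := by
    ext i
    have := i.isLt
    have := Fin.add_sub_le_of_strictMono (Fin.val_strictMono.comp g.strictMono)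
      (show ⟨0, by omega⟩ ≤ i from Fin.le_def.2 (Nat.zero_le _))
    simp only [Function.comp] at this
    change (g i : ℕ) - i + i = g i
    omega

lemma card_monotone_fin (m n : ℕ) :
    Nat.card {f : Fin m → Fin (n + 1) // Monotone f} = (n + m).choose m := by
  rw [Nat.card_congr ((monotoneEquivOrderEmbedding m n).trans powersetCard.ofFinEmbEquiv),
    powersetCard.card, Nat.card_eq_fintype_card, Fintype.card_fin]

def monoSeq {α : Type*} [Preorder α] (a : α) (m : ℕ) : Set (ℕ → α) :=
  {f | Monotone f ∧ ∀ j, m ≤ j → f j = a}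

lemma le_of_mem_monoSeq {α : Type*} [Preorder α] {a : α} {m : ℕ} {f : ℕ → α}
    (hf : f ∈ monoSeq a m) (j : ℕ) : f j ≤ a :=
  hf.2 (max j m) (le_max_right j m) ▸ hf.1 (le_max_left j m)

def padFin (m n : ℕ) (f : Fin m → Fin (n + 1)) (j : ℕ) : ℕ :=
  if h : j < m then f ⟨j, h⟩ else n

lemma padFin_of_lt {m n : ℕ} (f : Fin m → Fin (n + 1)) {j : ℕ} (h : j < m) :
    padFin m n f j = f ⟨j, h⟩ :=
  dif_pos h

lemma bijOn_padFin (m n : ℕ) : BijOn (padFin m n) {f | Monotone f} (monoSeq n m) := by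
  refine ⟨fun f hf => ⟨fun i j hij => ?_, fun j hj => dif_neg (by omega)⟩, fun f _ g _ hfg => ?_,
    fun f hf => ⟨fun i => ⟨f i, Nat.lt_succ_of_le (le_of_mem_monoSeq hf i)⟩,
      fun i j hij => hf.1 hij, funext fun j => ?_⟩⟩
  · unfold padFin
    split_ifs with hi hj hj
    · exact hf (Fin.mk_le_mk.2 hij)
    · exact Fin.is_le _
    · omega
    · exact le_rfl
  · funext i
    exact Fin.ext (by simpa [padFin_of_lt _ i.isLt] using congrFun hfg i)
  · by_cases hj : j < m
    · exact padFin_of_lt _ hj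
    · rw [padFin, dif_neg hj, hf.2 j (by omega)]

lemma ncard_monoSeq (m n : ℕ) : (monoSeq n m).ncard = (n + m).choose m := by
  rw [← (bijOn_padFin m n).ncard_eq, ← Nat.card_coe_set_eq]
  exact card_monotone_fin m n

lemma finite_monoSeq (m n : ℕ) : (monoSeq n m).Finite :=
  (bijOn_padFin m n).image_eq ▸ (toFinite _).image _

section Switching

variable {α : Type*} [LinearOrder α] {p : (ℕ → α) × (ℕ → α)}

noncomputable def firstCross (p : (ℕ → α) × (ℕ → α)) : ℕ :=
  sInf {j | p.2 j ≤ p.1 j}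

lemma firstCross_spec (h : ∃ j, p.2 j ≤ p.1 j) : p.2 (firstCross p) ≤ p.1 (firstCross p) :=
  Nat.sInf_mem h

lemma firstCross_le {j : ℕ} (h : p.2 j ≤ p.1 j) : firstCross p ≤ j :=
  Nat.sInf_le h

lemma lt_of_lt_firstCross {j : ℕ} (hj : j < firstCross p) : p.1 j < p.2 j :=
  not_le.1 (Nat.notMem_of_lt_sInf hj)

noncomputable def switch (p : (ℕ → α) × (ℕ → α)) : (ℕ → α) × (ℕ → α) :=
  (fun j => if j < firstCross p then p.1 j else p.2 (j + 1),
   fun j => if j ≤ firstCross p then p.2 j else p.1 (j - 1))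

lemma switch_fst_apply (p : (ℕ → α) × (ℕ → α)) (j : ℕ) :
    (switch p).1 j = if j < firstCross p then p.1 j else p.2 (j + 1) :=
  rfl

lemma switch_snd_apply (p : (ℕ → α) × (ℕ → α)) (j : ℕ) :
    (switch p).2 j = if j ≤ firstCross p then p.2 j else p.1 (j - 1) :=
  rfl

lemma firstCross_switch (h2 : Monotone p.2) :
    firstCross (switch p) = firstCross p := by
  have hcross : (switch p).2 (firstCross p) ≤ (switch p).1 (firstCross p) := by
    simpa [switch_fst_apply, switch_snd_apply] using h2 (Nat.le_succ (firstCross p))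
  refine le_antisymm (firstCross_le hcross) (not_lt.1 fun hlt => ?_)
  have := firstCross_spec ⟨_, hcross⟩
  rw [switch_fst_apply, switch_snd_apply, if_pos hlt, if_pos hlt.le] at this
  exact (lt_of_lt_firstCross hlt).not_ge this

lemma switch_switch (h2 : Monotone p.2) : switch (switch p) = p := by
  have hc := firstCross_switch h2
  ext j
  · rw [switch_fst_apply, hc]
    split_ifs with hj
    · rw [switch_fst_apply, if_pos hj]
    · rw [switch_snd_apply, if_neg (by omega), Nat.add_sub_cancel]
  · rw [switch_snd_apply, hc]
    split_ifs with hj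
    · rw [switch_snd_apply, if_pos hj]
    · rw [switch_fst_apply, if_neg (by omega), Nat.sub_add_cancel (by omega)]

lemma monotone_switch_fst (h1 : Monotone p.1) (h2 : Monotone p.2) :
    Monotone (switch p).1 := by
  refine monotone_nat_of_le_succ fun j => ?_
  simp only [switch_fst_apply]
  split_ifs with hj hj' hj'
  · exact h1 j.le_succ
  · exact (lt_of_lt_firstCross hj).le.trans (h2 (by omega))
  · omega
  · exact h2 (j + 1).le_succ

lemma monotone_switch_snd (h1 : Monotone p.1) (h2 : Monotone p.2) (h : ∃ j, p.2 j ≤ p.1 j) :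
    Monotone (switch p).2 := by
  refine monotone_nat_of_le_succ fun j => ?_
  simp only [switch_snd_apply]
  split_ifs with hj hj' hj'
  · exact h2 j.le_succ
  · obtain rfl : j = firstCross p := by omega
    exact firstCross_spec h
  · omega
  · exact h1 (by omega)

lemma exists_cross_of_mem_monoSeq {a : α} {r s : ℕ} (hp : p ∈ monoSeq a r ×ˢ monoSeq a s) :
    ∃ j, p.2 j ≤ p.1 j :=
  ⟨r, hp.1.2 r le_rfl ▸ le_of_mem_monoSeq hp.2 r⟩

lemma switch_mem_monoSeq {a : α} {r s : ℕ} (hp : p ∈ monoSeq a r ×ˢ monoSeq a (s + 1))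
    (hr : firstCross p ≤ r) (hs : firstCross p ≤ s) :
    switch p ∈ monoSeq a s ×ˢ monoSeq a (r + 1) := by
  have hcross := exists_cross_of_mem_monoSeq hp
  obtain ⟨⟨h1, hr1⟩, ⟨h2, hs2⟩⟩ := hp
  refine ⟨⟨monotone_switch_fst h1 h2, fun j hj => ?_⟩,
    ⟨monotone_switch_snd h1 h2 hcross, fun j hj => ?_⟩⟩
  · rw [switch_fst_apply, if_neg (by omega), hs2 _ (by omega)]
  · rw [switch_snd_apply, if_neg (by omega), hr1 _ (by omega)]

lemma bijOn_switch (a : α) (K : ℕ) :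
    BijOn switch (monoSeq a (K + 1) ×ˢ monoSeq a (K + 1) \ {p | ∀ i < K + 1, p.1 i < p.2 i})
      (monoSeq a K ×ˢ monoSeq a (K + 2)) := by
  refine InvOn.bijOn ⟨fun p hp => switch_switch hp.1.2.1, fun p hp => switch_switch hp.2.1⟩
    (fun p ⟨hp, hbad⟩ => ?_) (fun p hp => ?_)
  · simp only [mem_ofPred_eq, not_forall, not_lt] at hbad
    obtain ⟨i, hi, hcross⟩ := hbad
    have hc := firstCross_le hcross
    exact switch_mem_monoSeq hp (by omega) (by omega)
  · have hK : firstCross p ≤ K :=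
      firstCross_le (hp.1.2 K le_rfl ▸ le_of_mem_monoSeq hp.2 K)
    have hswap := switch_mem_monoSeq hp hK (by omega)
    refine ⟨hswap, fun hgood => ?_⟩
    have hlt := hgood (firstCross p) (by omega)
    rw [← firstCross_switch hp.2.1] at hlt
    exact hlt.not_ge (firstCross_spec (exists_cross_of_mem_monoSeq hswap))

end Switching

lemma card_monotone_pairs_eq_ncard (k n : ℕ) :
    Nat.card {p : (Fin k → Fin (n + 1)) × (Fin k → Fin (n + 1)) //
        Monotone p.1 ∧ Monotone p.2 ∧ ∀ i, p.1 i < p.2 i} =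
      (monoSeq n k ×ˢ monoSeq n k ∩ {p | ∀ i < k, p.1 i < p.2 i}).ncard := by
  have hbij := ((bijOn_padFin k n).prodMap (bijOn_padFin k n)).inter_mapsTo
    (s₂ := {p | ∀ i, p.1 i < p.2 i}) (t₂ := {p | ∀ i < k, p.1 i < p.2 i})
    (fun p hp i hi => by simpa [padFin_of_lt _ hi] using hp ⟨i, hi⟩)
    (fun p hp i => by simpa [padFin_of_lt _ i.isLt] using hp.2 i i.isLt)
  rw [← hbij.ncard_eq, ← Nat.card_coe_set_eq]
  exact Nat.card_congr (Equiv.subtypeEquivRight fun p => by simp [and_assoc])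

theorem stmt1_general (k n : ℕ) (hk : 1 ≤ k) :
    (Nat.card {p : (Fin k → Fin (n + 1)) × (Fin k → Fin (n + 1)) //
        Monotone p.1 ∧ Monotone p.2 ∧ ∀ i, p.1 i < p.2 i} : ℤ) =
      (Nat.choose (n + k) k : ℤ) ^ 2 -
        (Nat.choose (n + k + 1) (k + 1) : ℤ) * (Nat.choose (n + k - 1) (k - 1) : ℤ) := by
  obtain ⟨K, rfl⟩ : ∃ K, k = K + 1 := ⟨k - 1, by omega⟩
  have hsplit := ncard_inter_add_ncard_sdiff_eq_ncard (monoSeq n (K + 1) ×ˢ monoSeq n (K + 1))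
    {p | ∀ i < K + 1, p.1 i < p.2 i} ((finite_monoSeq _ _).prod (finite_monoSeq _ _))
  rw [(bijOn_switch n K).ncard_eq, ncard_prod, ncard_prod, ncard_monoSeq, ncard_monoSeq,
    ncard_monoSeq, ← card_monotone_pairs_eq_ncard] at hsplit
  rw [show n + (K + 1) + 1 = n + (K + 2) by omega, show n + (K + 1) - 1 = n + K by omega,
    Nat.add_sub_cancel]
  have hsplitℤ := congrArg (Nat.cast (R := ℤ)) hsplit
  push_cast at hsplitℤ
  linear_combination hsplitℤ

/-- The number of parallelogram polyominoes of width `k+1` and height `n`,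
encoded as pairs `(b, a)` of weakly increasing functions `Fin k → Fin (n+1)`
with `b i < a i`, equals the 2×2 Lindström–Gessel–Viennot determinant
`C(n+k, k)² − C(n+k+1, k+1) · C(n+k-1, k-1)`. -/
theorem stmt1 (k n : ℕ) (hk : 1 ≤ k) (hn : 1 ≤ n) :
    (Nat.card {p : (Fin k → Fin (n + 1)) × (Fin k → Fin (n + 1)) //
        Monotone p.1 ∧ Monotone p.2 ∧ ∀ i, p.1 i < p.2 i} : ℤ) =
      (Nat.choose (n + k) k : ℤ) ^ 2 -
        (Nat.choose (n + k + 1) (k + 1) : ℤ) * (Nat.choose (n + k - 1) (k - 1) : ℤ) :=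
  stmt1_general k n hk
end

section
/- For all natural numbers k ≥ 1 and n ≥ 1, the binomial coefficients satisfy (k+1) · ( C(n+k, k)² − C(n+k+1, k+1) · C(n+k-1, k-1) ) = C(n+k, k) · C(n+k-1, k). -/
/-! Writing `a = C(n+k, k)`, every other coefficient is a rational multiple of `a`:
`C(n+k+1, k+1) = a (n+k+1)/(k+1)`, `C(n+k+2, k+2) = a (n+k+1)(n+k+2)/((k+1)(k+2))` and
`C(n+k, k+1) = a n/(k+1)`. Both sides then equal `a² n (n+k+1)/(k+1)²`. -/

theorem Nat.add_two_mul_choose_sq_sub (n k : ℕ) :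
    ((k : ℤ) + 2) * ((Nat.choose (n + k + 1) (k + 1) : ℤ) ^ 2 -
        (Nat.choose (n + k + 2) (k + 2) : ℤ) * (Nat.choose (n + k) k : ℤ)) =
      (Nat.choose (n + k + 1) (k + 1) : ℤ) * (Nat.choose (n + k) (k + 1) : ℤ) := by
  have h₁ : ((n + k : ℤ) + 1) * Nat.choose (n + k) k =
      Nat.choose (n + k + 1) (k + 1) * (k + 1) := by
    exact_mod_cast Nat.add_one_mul_choose_eq (n + k) k
  have h₂ : ((n + k + 1 : ℤ) + 1) * Nat.choose (n + k + 1) (k + 1) =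
      Nat.choose (n + k + 2) (k + 2) * (k + 1 + 1) := by
    exact_mod_cast Nat.add_one_mul_choose_eq (n + k + 1) (k + 1)
  have h₃ : (Nat.choose (n + k) (k + 1) : ℤ) * (k + 1) = Nat.choose (n + k) k * n := by
    exact_mod_cast Nat.add_sub_cancel n k ▸ Nat.choose_succ_right_eq (n + k) k
  refine mul_left_cancel₀ (show (k : ℤ) + 1 ≠ 0 by positivity) ?_
  linear_combination ((k : ℤ) + 1) * (Nat.choose (n + k) k : ℤ) * h₂ -
    ((k : ℤ) + 2) * (Nat.choose (n + k + 1) (k + 1) : ℤ) * h₁ -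
    (Nat.choose (n + k + 1) (k + 1) : ℤ) * h₃

theorem stmt2_general (k n : ℕ) (hk : 1 ≤ k) :
    ((k : ℤ) + 1) * ((Nat.choose (n + k) k : ℤ) ^ 2 -
        (Nat.choose (n + k + 1) (k + 1) : ℤ) * (Nat.choose (n + k - 1) (k - 1) : ℤ)) =
      (Nat.choose (n + k) k : ℤ) * (Nat.choose (n + k - 1) k : ℤ) := by
  obtain ⟨k, rfl⟩ := Nat.exists_eq_add_of_le' hk
  simpa only [← add_assoc, Nat.add_sub_cancel, Nat.cast_add, Nat.cast_one, add_assoc (k : ℤ),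
    one_add_one_eq_two] using Nat.add_two_mul_choose_sq_sub n k

/-- The binomial identity equating the 2×2 LGV determinant with the closed
product formula for the number of parallelogram polyominoes of width `k+1`
and height `n`. -/
theorem stmt2 (k n : ℕ) (hk : 1 ≤ k) (hn : 1 ≤ n) :
    ((k : ℤ) + 1) * ((Nat.choose (n + k) k : ℤ) ^ 2 -
        (Nat.choose (n + k + 1) (k + 1) : ℤ) * (Nat.choose (n + k - 1) (k - 1) : ℤ)) =
      (Nat.choose (n + k) k : ℤ) * (Nat.choose (n + k - 1) k : ℤ) :=
  stmt2_general k n hk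
end

section
/- Fix natural numbers k ≥ 1 and n ≥ 1. Let L be the set of pairs (g, d) where g : Fin n → Fin k is an arbitrary function, d : Fin (k-1) → Fin (n+1) is weakly increasing (monotone), and for every i : Fin (k-1) one has (d i : ℕ) < card { m : Fin n | (g m : ℕ) ≤ (i : ℕ) }. Then |L| = k^(n-1) · C(n+k-2, k-1). -/
/-!
Encode a pair `(g, d)` by two multisets of columns in `ℤ/k`: the columns `U` of the `n` north
steps of the upper path and a multiset `M` of size `n - 1` whose cumulative counts are the
heights `d` (such multisets correspond exactly to the monotone `d` with values `≤ n - 1`).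
Rotating every column by `t ∈ ℤ/k` permutes the `k ^ n * C(n + k - 2, n - 1)` pairs `(U, M)`.
Along the cycle, the number of elements of `U` met minus the number of elements of `M` met
grows by exactly `1` per full turn, so by the cycle lemma exactly one rotation puts the lower
path strictly below the upper one. Hence the valid pairs are a `1/k` fraction of all pairs.
-/

open Finset

theorem existsUnique_cycle_lemma {n : ℕ} (hn : 0 < n) (P : ℕ → ℤ)
    (hP : ∀ x, P (x + n) = P x + 1) :
    ∃! t, t < n ∧ ∀ x, t < x → x < t + n → P t < P x := by
  obtain ⟨t₀, ht₀, hmin₀⟩ := exists_min_image (range n) P ⟨0, mem_range.2 hn⟩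
  set s := (range n).filter fun u => P u ≤ P t₀
  have hs : s.Nonempty := ⟨t₀, mem_filter.2 ⟨ht₀, le_rfl⟩⟩
  -- `t` is the last point of `[0, n)` where `P` attains its minimum
  set t := s.max' hs
  obtain ⟨ht, hPt⟩ : t ∈ range n ∧ P t ≤ P t₀ := mem_filter.1 (s.max'_mem hs)
  rw [mem_range] at ht
  have hmin : ∀ u < n, P t ≤ P u := fun u hu => hPt.trans (hmin₀ u (mem_range.2 hu))
  have hlast : ∀ u < n, P u ≤ P t → u ≤ t := fun u hu h =>
    s.le_max' u (mem_filter.2 ⟨mem_range.2 hu, h.trans hPt⟩)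
  have hwin : ∀ x, t < x → x < t + n → P t < P x := by
    intro x htx hxt
    rcases lt_or_ge x n with hx | hx
    · exact (hmin x hx).lt_of_ne fun h => by have := hlast x hx h.ge; omega
    · obtain ⟨u, rfl⟩ := Nat.exists_eq_add_of_le' hx
      have := hmin u (by omega)
      rw [hP]
      omega
  refine ⟨t, ⟨ht, hwin⟩, fun t' ⟨ht', hwin'⟩ => ?_⟩
  rcases lt_trichotomy t' t with h | h | h
  · have h₁ := hwin' t h (by omega)
    have h₂ := hwin (t' + n) (by omega) (by omega)
    rw [hP] at h₂
    omega
  · exact h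
  · have h₁ := hwin t' h (by omega)
    have h₂ := hwin' (t + n) (by omega) (by omega)
    rw [hP] at h₂
    omega

theorem Multiset.countP_lt_succ {α : Type*} (A : Multiset α) (f : α → ℕ) (j : ℕ) :
    A.countP (fun a => f a < j + 1) =
      A.countP (fun a => f a < j) + A.countP (fun a => f a = j) := by
  induction A using Multiset.induction_on with
  | empty => simp
  | cons a A ih =>
    simp only [Multiset.countP_cons, ih]
    split_ifs <;> omega

theorem Multiset.eq_of_countP_val_le {K : ℕ} {A B : Multiset (Fin (K + 1))}
    (hcard : card A = card B)
    (h : ∀ i < K, A.countP (fun a : Fin (K + 1) => (a : ℕ) ≤ i) =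
      B.countP (fun a : Fin (K + 1) => (a : ℕ) ≤ i)) : A = B := by
  have hlt : ∀ j, A.countP (fun a : Fin (K + 1) => (a : ℕ) < j) =
      B.countP (fun a : Fin (K + 1) => (a : ℕ) < j) := by
    rintro (_ | i)
    · simp
    · by_cases hi : i < K
      · simpa only [Nat.lt_succ_iff] using h i hi
      · rwa [countP_eq_card.2 fun a _ => by have := a.isLt; omega,
          countP_eq_card.2 fun a _ => by have := a.isLt; omega]
  have hcount : ∀ (C : Multiset (Fin (K + 1))) (a : Fin (K + 1)),
      C.count a = C.countP (fun b : Fin (K + 1) => (b : ℕ) = a) := fun C a =>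
    countP_congr rfl fun b _ => propext (Fin.ext_iff.trans eq_comm)
  ext a
  have hA := A.countP_lt_succ Fin.val a
  have hB := B.countP_lt_succ Fin.val a
  have := hlt (a + 1)
  have := hlt a
  rw [hcount, hcount]
  omega

theorem Monotone.card_filter_le_le_iff {α : Type*} [LinearOrder α] {K : ℕ} {d : Fin K → α}
    (hd : Monotone d) (i : Fin K) (r : α) : #{i' | d i' ≤ r} ≤ i ↔ r < d i := by
  constructor
  · intro h
    by_contra! hle
    have hsub : Iic i ⊆ univ.filter fun i' => d i' ≤ r := fun i' hi' =>
      mem_filter.2 ⟨mem_univ _, (hd (mem_Iic.1 hi')).trans hle⟩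
    have := card_le_card hsub
    rw [Fin.card_Iic] at this
    omega
  · intro h
    have hsub : (univ.filter fun i' => d i' ≤ r) ⊆ Iio i := fun i' hi' =>
      mem_Iio.2 (lt_of_not_ge fun hle => (hd hle).not_gt ((mem_filter.1 hi').2.trans_lt h))
    simpa using card_le_card hsub

theorem Nat.card_eq_card_mul_of_existsUnique {X G : Type*} (τ : G → X ≃ X) (V : Set X)
    (h : ∀ x, ∃! g, τ g x ∈ V) : Nat.card X = Nat.card V * Nat.card G := by
  choose σ hσ hσu using h
  rw [← Nat.card_prod]
  exact Nat.card_congr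
    { toFun := fun x => (⟨τ (σ x) x, hσ x⟩, σ x)
      invFun := fun p => (τ p.2).symm p.1
      left_inv := fun x => by simp
      right_inv := fun ⟨v, g⟩ => by
        have : σ ((τ g).symm v) = g := (hσu _ g (by simp)).symm
        ext <;> simp [this] }

namespace Polyomino

section Walk

open Fin.NatCast

variable {n : ℕ} [NeZero n]

-- The cast `ℕ → Fin n` reduces mod `n`, so `walk A x` counts the elements of `A` met in the
-- first `x` steps around the cycle `Fin n`.
def walk (A : Multiset (Fin n)) (x : ℕ) : ℕ := ∑ y ∈ range x, A.count (y : Fin n)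

theorem walk_add (A : Multiset (Fin n)) (t : ℕ) {j : ℕ} (hj : j ≤ n) :
    walk A (t + j) = walk A t + A.countP (fun a => ((a - t : Fin n) : ℕ) < j) := by
  induction j with
  | zero => simp
  | succ j ih =>
    rw [← add_assoc, walk, sum_range_succ, ← walk, ih (by omega), Multiset.countP_lt_succ,
      add_assoc, Multiset.count]
    congr 2
    refine Multiset.countP_congr rfl fun a _ => ?_
    rw [eq_iff_iff, Nat.cast_add, @eq_comm _ (_ + _) a, ← sub_eq_iff_eq_add', Fin.ext_iff,
      Fin.val_cast_of_lt (by omega)]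

theorem walk_add_period (A : Multiset (Fin n)) (t : ℕ) :
    walk A (t + n) = walk A t + Multiset.card A := by
  rw [walk_add A t le_rfl, Multiset.countP_eq_card.2 fun a _ => (a - (t : Fin n)).isLt]

theorem walk_add_succ (A : Multiset (Fin n)) (t : Fin n) {i : ℕ} (hi : i + 1 ≤ n) :
    walk A (t + (i + 1) : ℕ) =
      walk A t + (A.map (· - t)).countP (fun a : Fin n => (a : ℕ) ≤ i) := by
  rw [walk_add A t hi, Fin.cast_val_eq_self, Multiset.countP_map,
    ← Multiset.countP_eq_card_filter]
  simp only [Nat.lt_succ_iff]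

/-- With `M` and `U` the multisets of columns of north steps of a lower and an upper path, the
lower path stays strictly below the upper one at every interior vertical line. -/
def IsStrictlyBelow (M U : Multiset (Fin n)) : Prop :=
  ∀ i : ℕ, i + 1 < n →
    M.countP (fun a : Fin n => (a : ℕ) ≤ i) < U.countP (fun a : Fin n => (a : ℕ) ≤ i)

def gap (U M : Multiset (Fin n)) (x : ℕ) : ℤ := walk U x - walk M x

theorem gap_add_period {U M : Multiset (Fin n)}
    (hcard : Multiset.card U = Multiset.card M + 1) (x : ℕ) :
    gap U M (x + n) = gap U M x + 1 := by
  simp only [gap, walk_add_period, hcard]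
  push_cast
  ring

theorem isStrictlyBelow_map_sub_iff (U M : Multiset (Fin n)) (t : Fin n) :
    IsStrictlyBelow (M.map (· - t)) (U.map (· - t)) ↔
      ∀ x : ℕ, (t : ℕ) < x → x < t + n → gap U M t < gap U M x := by
  have key : ∀ i, i + 1 ≤ n → gap U M (t + (i + 1) : ℕ) = gap U M t
      + (U.map (· - t)).countP (fun a : Fin n => (a : ℕ) ≤ i)
      - (M.map (· - t)).countP (fun a : Fin n => (a : ℕ) ≤ i) := by
    intro i hi
    simp only [gap, walk_add_succ U t hi, walk_add_succ M t hi]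
    push_cast
    ring
  constructor
  · intro h x htx hxt
    obtain ⟨i, rfl⟩ : ∃ i, x = t + (i + 1) := ⟨x - t - 1, by omega⟩
    have := h i (by omega)
    rw [key i (by omega)]
    omega
  · intro h i hi
    have := h (t + (i + 1)) (by omega) (by omega)
    rw [key i hi.le] at this
    omega

theorem existsUnique_isStrictlyBelow_map_sub {U M : Multiset (Fin n)}
    (hcard : Multiset.card U = Multiset.card M + 1) :
    ∃! t : Fin n, IsStrictlyBelow (M.map (· - t)) (U.map (· - t)) := by
  obtain ⟨t, ⟨ht, hwin⟩, huniq⟩ :=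
    existsUnique_cycle_lemma (NeZero.pos n) (gap U M) (gap_add_period hcard)
  refine ⟨⟨t, ht⟩, (isStrictlyBelow_map_sub_iff U M _).2 hwin, fun t' h' => Fin.ext ?_⟩
  exact huniq t' ⟨t'.isLt, (isStrictlyBelow_map_sub_iff U M t').1 h'⟩

end Walk

section LowerPath

variable {K N : ℕ}

def heights (M : Sym (Fin (K + 1)) N) (i : Fin K) : Fin (N + 1 + 1) :=
  ⟨(M : Multiset (Fin (K + 1))).countP (fun a : Fin (K + 1) => (a : ℕ) ≤ i), by
    have := (Multiset.countP_le_card (fun a : Fin (K + 1) => (a : ℕ) ≤ i) M).trans_eq M.2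
    omega⟩

theorem monotone_heights (M : Sym (Fin (K + 1)) N) : Monotone (heights M) := fun i j hij => by
  simp only [heights, Fin.mk_le_mk, Multiset.countP_eq_card_filter]
  exact Multiset.card_le_card
    (Multiset.monotone_filter_right _ fun a (ha : (a : ℕ) ≤ i) => ha.trans hij)

theorem heights_injective : Function.Injective (heights (K := K) (N := N)) := fun A B h =>
  Sym.coe_injective <| Multiset.eq_of_countP_val_le (A.2.trans B.2.symm) fun i hi =>
    congrArg Fin.val (congrFun h ⟨i, hi⟩)

theorem exists_heights_eq {d : Fin K → Fin (N + 1 + 1)} (hd : Monotone d)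
    (hN : ∀ i, (d i : ℕ) ≤ N) : ∃ M : Sym (Fin (K + 1)) N, heights M = d := by
  -- the `r`-th north step of the lower path lies in column `#{i | d i ≤ r}`
  let col (r : Fin N) : Fin (K + 1) :=
    ⟨#{i | (d i : ℕ) ≤ r}, Nat.lt_succ_of_le ((card_filter_le _ _).trans (by simp))⟩
  refine ⟨⟨univ.val.map col, by simp⟩, funext fun i => Fin.ext ?_⟩
  have hd' : Monotone fun i => (d i : ℕ) := fun _ _ h => hd h
  change (univ.val.map col).countP _ = _
  rw [Multiset.countP_map]
  change #{r : Fin N | #{i' | (d i' : ℕ) ≤ r} ≤ i} = _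
  simp_rw [hd'.card_filter_le_le_iff]
  rw [Fin.card_filter_val_lt, min_eq_right (hN i)]

theorem isStrictlyBelow_iff_heights_lt (g : Fin (N + 1) → Fin (K + 1))
    (M : Sym (Fin (K + 1)) N) :
    IsStrictlyBelow (M : Multiset (Fin (K + 1))) (univ.val.map g) ↔
      ∀ i : Fin K, (heights M i : ℕ) < #{m | (g m : ℕ) ≤ i} := by
  simp only [IsStrictlyBelow, heights, Multiset.countP_map]
  exact ⟨fun h i => h i (by omega), fun h i hi => h ⟨i, by omega⟩⟩

end LowerPath

section Counting

variable (K N : ℕ)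

theorem card_isStrictlyBelow :
    Nat.card {x : (Fin (N + 1) → Fin (K + 1)) × Sym (Fin (K + 1)) N //
      IsStrictlyBelow (x.2 : Multiset (Fin (K + 1))) (univ.val.map x.1)} =
      (K + 1) ^ N * (N + K).choose K := by
  let τ (t : Fin (K + 1)) : (Fin (N + 1) → Fin (K + 1)) × Sym (Fin (K + 1)) N ≃
      (Fin (N + 1) → Fin (K + 1)) × Sym (Fin (K + 1)) N :=
    (Equiv.arrowCongr (Equiv.refl _) (Equiv.subRight t)).prodCongr
      (Sym.equivCongr (Equiv.subRight t))
  have h := Nat.card_eq_card_mul_of_existsUnique τ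
    {x | IsStrictlyBelow (x.2 : Multiset (Fin (K + 1))) (univ.val.map x.1)} fun x => by
      simpa [τ, Sym.coe_map, Multiset.map_map, Function.comp_def] using
        existsUnique_isStrictlyBelow_map_sub (U := univ.val.map x.1) (M := x.2) (by simp)
  rw [Nat.card_prod, Nat.card_fun, Nat.card_eq_fintype_card (α := Sym _ _),
    Sym.card_sym_eq_choose] at h
  simp only [Nat.card_eq_fintype_card, Fintype.card_fin] at h
  rw [show K + 1 + N - 1 = N + K by omega, Nat.choose_symm_add, pow_succ, mul_right_comm] at h
  exact (Nat.eq_of_mul_eq_mul_right K.succ_pos h).symm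

theorem card_parallelogram_eq_card_isStrictlyBelow :
    Nat.card {p : (Fin (N + 1) → Fin (K + 1)) × (Fin K → Fin (N + 1 + 1)) //
      Monotone p.2 ∧ ∀ i : Fin K, (p.2 i : ℕ) < #{m | (p.1 m : ℕ) ≤ i}} =
    Nat.card {x : (Fin (N + 1) → Fin (K + 1)) × Sym (Fin (K + 1)) N //
      IsStrictlyBelow (x.2 : Multiset (Fin (K + 1))) (univ.val.map x.1)} := by
  refine (Nat.card_congr (Equiv.ofBijective (fun x => ⟨(x.1.1, heights x.1.2),
    monotone_heights _, (isStrictlyBelow_iff_heights_lt _ _).1 x.2⟩) ⟨?_, ?_⟩)).symm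
  · rintro ⟨⟨g, M⟩, _⟩ ⟨⟨g', M'⟩, _⟩ h
    obtain ⟨rfl, h⟩ := Prod.ext_iff.1 (congrArg Subtype.val h)
    obtain rfl := heights_injective h
    rfl
  · rintro ⟨⟨g, d⟩, hd, hlt⟩
    obtain ⟨M, rfl⟩ := exists_heights_eq hd fun i =>
      Nat.lt_succ_iff.1 ((hlt i).trans_le ((card_filter_le _ _).trans (by simp)))
    exact ⟨⟨(g, M), (isStrictlyBelow_iff_heights_lt g M).2 hlt⟩, rfl⟩

end Counting

end Polyomino

/-- The number of labelled parallelogram polyominoes of width `k` and height `n`,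
encoded as pairs `(g, d)` where `g : Fin n → Fin k` records the column of each
label on the upper path and `d : Fin (k-1) → Fin (n+1)` is the weakly increasing
interior-height sequence of the lower path, with the strictly-below condition
`d i < #{m : g m ≤ i}`, equals `k^(n-1) * C(n+k-2, k-1)`. -/
theorem stmt3 (k n : ℕ) (hk : 1 ≤ k) (hn : 1 ≤ n) :
    Nat.card {p : (Fin n → Fin k) × (Fin (k - 1) → Fin (n + 1)) //
        Monotone p.2 ∧ ∀ i : Fin (k - 1),
          (p.2 i : ℕ) < (Finset.univ.filter fun m : Fin n => (p.1 m : ℕ) ≤ (i : ℕ)).card} =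
      k ^ (n - 1) * Nat.choose (n + k - 2) (k - 1) := by
  obtain ⟨K, rfl⟩ : ∃ K, k = K + 1 := ⟨k - 1, by omega⟩
  obtain ⟨N, rfl⟩ : ∃ N, n = N + 1 := ⟨n - 1, by omega⟩
  simp only [Nat.add_one_sub_one, show N + 1 + (K + 1) - 2 = N + K by omega]
  rw [Polyomino.card_parallelogram_eq_card_isStrictlyBelow, Polyomino.card_isStrictlyBelow]
end

section
/- Fix natural numbers k ≥ 1 and n ≥ 1, and let σ be a permutation of Fin n. Let L be the set of pairs (g, d) where g : Fin n → Fin k, d : Fin (k-1) → Fin (n+1) is weakly increasing, and for every i : Fin (k-1), (d i : ℕ) < card { m : Fin n | (g m : ℕ) ≤ (i : ℕ) }. Let c denote the number of orbits of the cyclic subgroup generated by σ acting on Fin n (i.e. the number of cycles of σ, counting fixed points as cycles). Then card { (g, d) ∈ L | g ∘ σ = g } = k^(c-1) · C(n+k-2, k-1). -/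
/-!
Record the lower path by the multiset `s` of columns of its `n - 1` north steps and the upper
path by the multiset of columns `g m` of the labels. The lower path is strictly below the upper
one exactly when the sequence `c i = #g⁻¹(i) - count i s`, whose total is `n - (n - 1) = 1`,
has positive partial sums at every interior line. Rotating all columns cyclically
(`g ↦ g - t`, `s ↦ s - t`) commutes with `σ`, and by the cycle lemma exactly one of the `k`
rotations of a sequence of total `1` has this property. So the `σ`-fixed polyominoes are a
`1 / k` fraction of the pairs `(g, s)` with `g` constant on the cycles of `σ`, and there are
`k ^ c * C(n + k - 2, k - 1)` such pairs.
-/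

open Fin.NatCast

namespace CycleLemma

open Finset

variable {k : ℕ} [NeZero k] (c : Fin k → ℤ)

def partialSum (j : ℕ) : ℤ := ∑ i ∈ range j, c (i : Fin k)

lemma partialSum_add (t j : ℕ) :
    partialSum c (t + j) = partialSum c t + partialSum (fun i : Fin k => c (i + t)) j := by
  rw [partialSum, sum_range_add]
  simp only [partialSum, Nat.cast_add, add_comm]

lemma partialSum_period_add (j : ℕ) : partialSum c (k + j) = ∑ i, c i + partialSum c j := by
  rw [partialSum_add, partialSum, ← Fin.sum_univ_eq_sum_range (fun i => c (i : Fin k))]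
  simp [partialSum]

lemma partialSum_rotate (t : Fin k) (j : ℕ) :
    partialSum (fun i : Fin k => c (i + t)) j = partialSum c (t + j) - partialSum c t := by
  rw [partialSum_add, Fin.cast_val_eq_self, add_sub_cancel_left]

theorem existsUnique_partialSum_rotate_pos (hc : ∑ i, c i = 1) :
    ∃! t : Fin k, ∀ j, 0 < j → j < k → 0 < partialSum (fun i : Fin k => c (i + t)) j := by
  simp only [partialSum_rotate, sub_pos]
  have hk : 0 < k := Nat.pos_of_neZero k
  have period (j : ℕ) : partialSum c (k + j) = 1 + partialSum c j := by
    rw [partialSum_period_add, hc]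
  have not_lt_of_starts (a b : Fin k)
      (ha : ∀ j, 0 < j → j < k → partialSum c a < partialSum c (a + j))
      (hb : ∀ j, 0 < j → j < k → partialSum c b < partialSum c (b + j)) : ¬ a < b := by
    intro hab
    have h1 := ha (b - a) (by omega) (by omega)
    have h2 := hb (a + k - b) (by omega) (by omega)
    rw [show (a : ℕ) + (b - a) = b by omega] at h1
    rw [show (b : ℕ) + (a + k - b) = k + a by omega, period] at h2
    omega
  -- `- t` breaks ties: `t` is the last minimum of `partialSum c` on `[0, k)`.
  obtain ⟨t, -, ht⟩ := exists_min_image univ (fun t : Fin k => k * partialSum c t - t)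
    univ_nonempty
  have hstart : ∀ j, 0 < j → j < k → partialSum c t < partialSum c (t + j) := by
    intro j hj hjk
    rcases lt_or_ge ((t : ℕ) + j) k with hlt | hge
    · have := ht ⟨t + j, hlt⟩ (mem_univ _)
      push_cast at this
      nlinarith
    · obtain ⟨s, hs⟩ : ∃ s, (t : ℕ) + j = k + s := ⟨t + j - k, by omega⟩
      have := ht ⟨s, by omega⟩ (mem_univ _)
      rw [hs, period]
      push_cast at this
      nlinarith
  exact ⟨t, hstart, fun t' ht' => le_antisymm (not_lt.1 (not_lt_of_starts t t' hstart ht'))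
    (not_lt.1 (not_lt_of_starts t' t ht' hstart))⟩

end CycleLemma

namespace Multiset

variable {k : ℕ}

lemma countP_val_lt_add_one (s : Multiset (Fin k)) (i : Fin k) :
    s.countP (fun x : Fin k => (x : ℕ) < i + 1) =
      s.countP (fun x : Fin k => (x : ℕ) < i) + s.count i := by
  induction s using Multiset.induction_on with
  | empty => simp
  | cons a s ih =>
    simp only [countP_cons, count_cons, ih]
    have : (a : ℕ) = i ↔ i = a := by rw [Fin.val_eq_val, eq_comm]
    split_ifs <;> omega

lemma countP_val_lt_of_le (s : Multiset (Fin k)) {j : ℕ} (hj : k ≤ j) :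
    s.countP (fun x : Fin k => (x : ℕ) < j) = card s :=
  countP_eq_card.2 fun x _ => x.2.trans_le hj

lemma sum_range_count_eq_countP [NeZero k] (s : Multiset (Fin k)) {j : ℕ} (hj : j ≤ k) :
    ∑ i ∈ Finset.range j, s.count (i : Fin k) = s.countP (fun x : Fin k => (x : ℕ) < j) := by
  induction j with
  | zero => simp
  | succ j ih =>
    have step := countP_val_lt_add_one s (j : Fin k)
    rw [Fin.val_cast_of_lt hj] at step
    rw [Finset.sum_range_succ, ih (by omega), step]

lemma eq_of_countP_val_lt_eq {s s' : Multiset (Fin k)}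
    (h : ∀ j : ℕ,
      s.countP (fun x : Fin k => (x : ℕ) < j) = s'.countP (fun x : Fin k => (x : ℕ) < j)) :
    s = s' := by
  ext i
  have := countP_val_lt_add_one s i
  have := countP_val_lt_add_one s' i
  rw [h, h] at *
  omega

end Multiset

namespace Equiv.Perm

variable {α β : Type*}

lemma comp_zpow_eq_self {g : α → β} {σ : Perm α} (h : g ∘ σ = g) (z : ℤ) :
    g ∘ ⇑(σ ^ z) = g := by
  induction z using Int.induction_on with
  | zero => rfl
  | succ i ih => rw [zpow_add_one, coe_mul, ← Function.comp_assoc, ih, h]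
  | pred i ih =>
    rw [zpow_sub_one, coe_mul, ← Function.comp_assoc, ih]
    conv_lhs => rw [← h]
    ext; simp

def invariantFunEquiv (σ : Perm α) :
    {g : α → β // g ∘ σ = g} ≃
      (MulAction.orbitRel.Quotient (Subgroup.zpowers σ) α → β) where
  toFun g := Quotient.lift g.1 fun _ b ⟨⟨_, z, rfl⟩, hab⟩ =>
    hab ▸ congrFun (comp_zpow_eq_self g.2 z) b
  invFun f := ⟨f ∘ Quotient.mk'',
    funext fun _ => congrArg f (Quotient.sound' ⟨⟨σ, Subgroup.mem_zpowers σ⟩, rfl⟩)⟩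
  left_inv _ := rfl
  right_inv _ := funext fun q => Quotient.inductionOn' q fun _ => rfl

end Equiv.Perm

namespace AddAction

variable {G X : Type*} [AddGroup G] [AddAction G X]

noncomputable def equivProdOfExistsUnique {S : Set X} (h : ∀ x : X, ∃! g : G, g +ᵥ x ∈ S) :
    X ≃ G × S where
  toFun x := ((h x).exists.choose, ⟨_, (h x).exists.choose_spec⟩)
  invFun p := -p.1 +ᵥ (p.2 : X)
  left_inv x := neg_vadd_vadd _ x
  right_inv p := by
    have hp : (h (-p.1 +ᵥ (p.2 : X))).exists.choose = p.1 :=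
      (h _).unique (h _).exists.choose_spec (by simp)
    ext <;> simp [hp]

end AddAction

namespace ParallelogramPolyomino

open CycleLemma Multiset
open scoped Finset

variable {k : ℕ}

def IsStrictlyBelow (s u : Multiset (Fin k)) : Prop :=
  ∀ i : Fin (k - 1),
    s.countP (fun x : Fin k => (x : ℕ) ≤ i) < u.countP (fun x : Fin k => (x : ℕ) ≤ i)

lemma isStrictlyBelow_iff {s u : Multiset (Fin k)} :
    IsStrictlyBelow s u ↔ ∀ j, 0 < j → j < k →
      s.countP (fun x : Fin k => (x : ℕ) < j) < u.countP (fun x : Fin k => (x : ℕ) < j) := by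
  simp only [IsStrictlyBelow, ← Nat.lt_add_one_iff]
  refine ⟨fun h j hj hjk => ?_, fun h i => h (i + 1) i.succ_pos (by omega)⟩
  obtain ⟨i, rfl⟩ : ∃ i, j = i + 1 := ⟨j - 1, by omega⟩
  exact h ⟨i, by omega⟩

lemma count_map_sub [NeZero k] (v : Multiset (Fin k)) (t i : Fin k) :
    (v.map (· - t)).count i = v.count (i + t) := by
  simpa using count_map_eq_count' (· - t) v sub_left_injective (i + t)

theorem existsUnique_isStrictlyBelow_map_sub [NeZero k] {s u : Multiset (Fin k)}
    (h : card u = card s + 1) :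
    ∃! t : Fin k, IsStrictlyBelow (s.map (· - t)) (u.map (· - t)) := by
  set c : Fin k → ℤ := fun i => u.count i - s.count i
  have hc : ∑ i, c i = 1 := by
    simp only [c, Finset.sum_sub_distrib, ← Nat.cast_sum]
    rw [Multiset.sum_count_eq_card (fun a _ => Finset.mem_univ a),
      Multiset.sum_count_eq_card (fun a _ => Finset.mem_univ a), h]
    push_cast
    ring
  refine (existsUnique_congr fun t => ?_).1 (existsUnique_partialSum_rotate_pos c hc)
  rw [isStrictlyBelow_iff]
  refine forall₂_congr fun j _ => forall_congr' fun hjk => ?_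
  simp only [partialSum, c, Finset.sum_sub_distrib, ← count_map_sub, ← Nat.cast_sum,
    sum_range_count_eq_countP _ hjk.le, sub_pos, Nat.cast_lt]

variable {n : ℕ}

def lowerPath (s : Sym (Fin k) (n - 1)) (i : Fin (k - 1)) : Fin (n + 1) :=
  ⟨s.1.countP (fun x : Fin k => (x : ℕ) ≤ i), by
    have := countP_le_card (fun x : Fin k => (x : ℕ) ≤ i) s.1
    rw [s.2] at this
    omega⟩

lemma lowerPath_monotone (s : Sym (Fin k) (n - 1)) : Monotone (lowerPath s) := fun i i' h => by
  simp only [lowerPath, Fin.mk_le_mk, countP_eq_card_filter]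
  exact card_le_card (monotone_filter_right _ fun x hx => hx.trans h)

lemma lowerPath_injective : Function.Injective (lowerPath (k := k) (n := n)) := by
  intro s s' h
  refine Sym.coe_injective (eq_of_countP_val_lt_eq fun j => ?_)
  rcases Nat.eq_zero_or_pos j with rfl | hj
  · simp
  rcases le_or_gt k j with hkj | hjk
  · rw [countP_val_lt_of_le _ hkj, countP_val_lt_of_le _ hkj, Sym.card_coe, Sym.card_coe]
  obtain ⟨i, rfl⟩ : ∃ i, j = i + 1 := ⟨j - 1, by omega⟩
  have := congrArg Fin.val (congrFun h ⟨i, by omega⟩)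
  simp only [Nat.lt_add_one_iff]
  exact this

lemma exists_lowerPath_eq [NeZero k] {d : Fin (k - 1) → Fin (n + 1)} (hd : Monotone d)
    (hbound : ∀ i, (d i : ℕ) ≤ n - 1) : ∃ s, lowerPath s = d := by
  -- the lower step from height `h` to `h + 1` lies in the column `#{i | d i ≤ h}`
  let column (h : ℕ) : Fin k := ⟨#{i | (d i : ℕ) ≤ h}, by
    have := Finset.card_filter_le (Finset.univ : Finset (Fin (k - 1))) fun i => (d i : ℕ) ≤ h
    rw [Finset.card_univ, Fintype.card_fin] at this
    have := Nat.pos_of_neZero k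
    omega⟩
  refine ⟨⟨(Finset.range (n - 1)).val.map column, by simp⟩, funext fun i => Fin.ext ?_⟩
  have hcol (h : ℕ) : (column h : ℕ) ≤ i ↔ h < d i := by
    rw [← not_lt, Tuple.lt_card_le_iff_apply_le_of_monotone (f := fun i => (d i : ℕ))
      (fun _ _ hab => hd hab), not_le]
  simp only [lowerPath, countP_map]
  change #{h ∈ Finset.range (n - 1) | (column h : ℕ) ≤ i} = d i
  rw [Finset.filter_congr fun h _ => hcol h]
  convert Finset.card_range (d i : ℕ) using 2
  ext h
  simp only [Finset.mem_filter, Finset.mem_range]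
  have := hbound i
  omega

variable (k) (σ : Equiv.Perm (Fin n))

abbrev PathPair (N : ℕ) : Type := {g : Fin n → Fin k // g ∘ σ = g} × Sym (Fin k) N

abbrev rotation [NeZero k] (N : ℕ) : AddAction (Fin k) (PathPair k σ N) where
  vadd t x := (⟨fun m => x.1.1 m - t, funext fun m => congrArg (· - t) (congrFun x.1.2 m)⟩,
    x.2.map (· - t))
  zero_vadd x := Prod.ext (Subtype.ext (funext fun _ => sub_zero _))
    ((Sym.map_congr fun _ _ => sub_zero _).trans (Sym.map_id' _))
  add_vadd t t' x := Prod.ext (Subtype.ext (funext fun _ => by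
      change _ - _ = _ - _ - _
      rw [sub_sub, add_comm]))
    ((Sym.map_congr fun _ _ => by simp [sub_sub, add_comm t']).trans (Sym.map_map _ _ _).symm)

def upperColumns (g : Fin n → Fin k) : Multiset (Fin k) := Finset.univ.val.map g

lemma card_pathPair_eq_mul [NeZero k] (hn : 1 ≤ n) :
    Nat.card (PathPair k σ (n - 1)) =
      k * Nat.card
        {x : PathPair k σ (n - 1) // IsStrictlyBelow x.2.1 (upperColumns k x.1.1)} := by
  let := rotation k σ (n - 1)
  refine (Nat.card_congr (AddAction.equivProdOfExistsUnique (G := Fin k)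
    (S := {x | IsStrictlyBelow x.2.1 (upperColumns k x.1.1)}) fun x => ?_)).trans ?_
  · have hcard : card (upperColumns k x.1.1) = card x.2.1 + 1 := by
      simp only [upperColumns, Multiset.card_map, Finset.card_val, Finset.card_univ,
        Fintype.card_fin, x.2.2]
      omega
    refine (existsUnique_congr fun t => ?_).1 (existsUnique_isStrictlyBelow_map_sub hcard)
    rw [upperColumns, Multiset.map_map]
    rfl
  · rw [Nat.card_prod, Nat.card_fin]
    rfl

lemma card_pathPair [NeZero k] (hn : 1 ≤ n) :
    Nat.card (PathPair k σ (n - 1)) =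
      k ^ Nat.card (MulAction.orbitRel.Quotient (Subgroup.zpowers σ) (Fin n)) *
        Nat.choose (n + k - 2) (k - 1) := by
  have := Nat.pos_of_neZero k
  rw [Nat.card_prod, Nat.card_congr σ.invariantFunEquiv, Nat.card_fun,
    Sym.natCard_sym_eq_multichoose, Nat.card_fin, Nat.multichoose_eq,
    show k + (n - 1) - 1 = n + k - 2 by omega]
  exact congrArg _ (Nat.choose_symm_of_eq_add (by omega))

abbrev FixedPolyomino : Type :=
  {p : (Fin n → Fin k) × (Fin (k - 1) → Fin (n + 1)) //
    (Monotone p.2 ∧ ∀ i : Fin (k - 1),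
      (p.2 i : ℕ) < #{m | (p.1 m : ℕ) ≤ (i : ℕ)}) ∧
    p.1 ∘ σ = p.1}

lemma isStrictlyBelow_upperColumns_iff (s : Sym (Fin k) (n - 1)) (g : Fin n → Fin k) :
    IsStrictlyBelow s.1 (upperColumns k g) ↔
      ∀ i, (lowerPath s i : ℕ) < #{m | (g m : ℕ) ≤ i} := by
  simp only [IsStrictlyBelow, upperColumns, countP_map]
  rfl

noncomputable def equivFixedPolyomino [NeZero k] :
    {x : PathPair k σ (n - 1) // IsStrictlyBelow x.2.1 (upperColumns k x.1.1)} ≃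
      FixedPolyomino k σ :=
  Equiv.ofBijective
    (fun x => ⟨(x.1.1.1, lowerPath x.1.2),
      ⟨lowerPath_monotone _, (isStrictlyBelow_upperColumns_iff k _ _).1 x.2⟩, x.1.1.2⟩)
    ⟨fun x y h => by
      simp only [Subtype.mk.injEq, Prod.mk.injEq] at h
      exact Subtype.ext (Prod.ext (Subtype.ext h.1) (lowerPath_injective h.2)),
    fun ⟨⟨g, d⟩, ⟨hmono, hbelow⟩, hσ⟩ => by
      have hbound (i : Fin (k - 1)) : (d i : ℕ) ≤ n - 1 := by
        have : (d i : ℕ) < _ := (hbelow i).trans_le (Finset.card_filter_le _ _)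
        rw [Finset.card_univ, Fintype.card_fin] at this
        omega
      obtain ⟨s, rfl⟩ := exists_lowerPath_eq hmono hbound
      exact ⟨⟨(⟨g, hσ⟩, s), (isStrictlyBelow_upperColumns_iff k s g).2 hbelow⟩, rfl⟩⟩

end ParallelogramPolyomino

open ParallelogramPolyomino in
/-- Fixed-point count for the action of a permutation `σ` of the labels on
labelled parallelogram polyominoes of width `k` and height `n` (encoded as pairs
`(g, d)` with `g : Fin n → Fin k` the column of each label and
`d : Fin (k-1) → Fin (n+1)` the weakly increasing lower path satisfying
`d i < #{m : g m ≤ i}`): it equals `k^(c-1) * C(n+k-2, k-1)` where `c` is the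
number of cycles (orbits) of `σ`. -/
theorem stmt5 (k n : ℕ) (hk : 1 ≤ k) (hn : 1 ≤ n) (σ : Equiv.Perm (Fin n)) :
    Nat.card {p : (Fin n → Fin k) × (Fin (k - 1) → Fin (n + 1)) //
        (Monotone p.2 ∧ ∀ i : Fin (k - 1),
          (p.2 i : ℕ) < (Finset.univ.filter fun m : Fin n => (p.1 m : ℕ) ≤ (i : ℕ)).card) ∧
        p.1 ∘ σ = p.1} =
      k ^ (Nat.card (MulAction.orbitRel.Quotient (Subgroup.zpowers σ) (Fin n)) - 1) *
        Nat.choose (n + k - 2) (k - 1) := by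
  have : NeZero k := ⟨by omega⟩
  have : Nonempty (MulAction.orbitRel.Quotient (Subgroup.zpowers σ) (Fin n)) :=
    ⟨Quotient.mk'' ⟨0, hn⟩⟩
  obtain ⟨c, hc⟩ : ∃ c, Nat.card (MulAction.orbitRel.Quotient (Subgroup.zpowers σ) (Fin n)) =
      c + 1 := ⟨_, (Nat.succ_pred_eq_of_pos Nat.card_pos).symm⟩
  have hcount := (card_pathPair_eq_mul k σ hn).symm.trans (card_pathPair k σ hn)
  rw [hc, pow_succ] at hcount
  rw [← Nat.card_congr (equivFixedPolyomino k σ), hc, Nat.add_sub_cancel]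
  exact Nat.eq_of_mul_eq_mul_left (by omega : 0 < k) (by rw [hcount]; ring)
end

section
/- Fix natural numbers k ≥ 1 and n ≥ 1. Let S be the set of pairs (g, h) where g : Fin n → Fin k, h : Fin (k-1) → Fin n, and, denoting by h↑ : Fin (k-1) → Fin n the weakly increasing rearrangement of h (h↑ = h ∘ Tuple.sort h), for every i : Fin (k-1) one has (h↑ i : ℕ) < card { m : Fin n | (g m : ℕ) ≤ (i : ℕ) }. Then |S| = k^(n-1) · n^(k-1). -/
/-!
Cut an arbitrary pair `(g, h) : (Fin n → Fin (K + 1)) × (Fin K → Fin n)` at the first column `i`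
where the lower path (read off from `h`) reaches the upper path (read off from `g`). Left of the
cut sits a polyomino of width `i + 1` and some height `t`, and the remaining data are
unconstrained; so, writing `P(i, t)` for the number of polyominoes of width `i + 1` and height `t`,
`(K + 1) ^ n * n ^ K = ∑ C(n, t) C(K, i) P(i, t) (K - i) ^ (n - t) (n - t) ^ (K - i)`.
The numbers `(i + 1) ^ (t - 1) * t ^ i` satisfy the same identity. This is a bivariate Abel
identity, proved in the form `abelSum n m y z = (1 + y + m) ^ n * (z + n) ^ m` by strong induction
on `n + m`: both sides have the same Taylor expansions in the shifts `y` and `z`, and both vanish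
at `y = -1 - m` when `m < n` and at `z = -n` when `n ≤ m`, because there the sum becomes a finite
difference of order `n` (resp. `m`) of a polynomial of smaller degree. The two expansions of
`(K + 1) ^ n * n ^ K` differ only in the term `(i, t) = (K, n)`, which gives `P(K, n)` by strong
induction on `K + n`.
-/

open Finset Polynomial

theorem Nat.choose_mul_choose_sub_comm (n t j : ℕ) :
    n.choose t * (n - t).choose j = n.choose j * (n - j).choose t := by
  have h₁ := Nat.choose_mul (n := n) (k := t + j) (s := t) (by omega)
  have h₂ := Nat.choose_mul (n := n) (k := t + j) (s := j) (by omega)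
  rw [Nat.add_sub_cancel_left] at h₁
  rw [Nat.add_sub_cancel] at h₂
  rw [← h₁, ← h₂, Nat.choose_symm_add]

theorem Finset.sum_range_sum_range_sub_comm {M : Type*} [AddCommMonoid M] (n : ℕ)
    (f : ℕ → ℕ → M) :
    ∑ a ∈ range (n + 1), ∑ b ∈ range (n - a + 1), f a b =
      ∑ b ∈ range (n + 1), ∑ a ∈ range (n - b + 1), f a b :=
  Finset.sum_comm' fun a b => by simp only [mem_range]; omega

theorem Polynomial.sum_neg_one_pow_mul_choose_mul_eval_eq_zero {R : Type*} [CommRing R]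
    {P : R[X]} {m : ℕ} (hP : P.natDegree < m) :
    ∑ k ∈ range (m + 1), (-1 : R) ^ (m - k) * m.choose k * P.eval (k : R) = 0 := by
  have := congr_fun (fwdDiff_iter_eq_zero_of_degree_lt hP) 0
  rw [fwdDiff_iter_eq_sum_shift] at this
  simpa [zsmul_eq_mul] using this

def abelSum (n m : ℕ) (y z : ℤ) : ℤ :=
  ∑ t ∈ range (n + 1), ∑ i ∈ range (m + 1),
    n.choose t * m.choose i * ((1 + i) ^ (t - 1) * t ^ i) *
      (y + m - i) ^ (n - t) * (z + n - t) ^ (m - i)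

def abelClosedForm (n m : ℕ) (y z : ℤ) : ℤ := (1 + y + m) ^ n * (z + n) ^ m

theorem abelSum_add_left (n m : ℕ) (y w z : ℤ) :
    abelSum n m (y + w) z =
      ∑ j ∈ range (n + 1), n.choose j * w ^ j * abelSum (n - j) m y (z + j) := by
  simp_rw [abelSum, mul_sum]
  calc _ = ∑ t ∈ range (n + 1), ∑ j ∈ range (n - t + 1), ∑ i ∈ range (m + 1),
        (n.choose t * (n - t).choose j : ℕ) * m.choose i * ((1 + i) ^ (t - 1) * t ^ i) *
          w ^ j * (y + m - i) ^ (n - t - j) * (z + n - t) ^ (m - i) := by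
        refine sum_congr rfl fun t _ => ?_
        rw [sum_comm]
        refine sum_congr rfl fun i _ => ?_
        rw [show y + w + m - i = w + (y + m - i) by ring, add_pow w, mul_sum, sum_mul]
        refine sum_congr rfl fun j _ => ?_
        push_cast
        ring
    _ = _ := by
        rw [sum_range_sum_range_sub_comm n]
        refine sum_congr rfl fun j hj => sum_congr rfl fun t _ => sum_congr rfl fun i _ => ?_
        have hjn : j ≤ n := Nat.lt_succ_iff.mp (mem_range.mp hj)
        rw [Nat.choose_mul_choose_sub_comm, Nat.sub_right_comm]
        push_cast [hjn]
        ring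

theorem abelSum_add_right (n m : ℕ) (y z w : ℤ) :
    abelSum n m y (z + w) =
      ∑ j ∈ range (m + 1), m.choose j * w ^ j * abelSum n (m - j) (y + j) z := by
  simp_rw [abelSum, mul_sum]
  calc _ = ∑ t ∈ range (n + 1), ∑ i ∈ range (m + 1), ∑ j ∈ range (m - i + 1),
        n.choose t * (m.choose i * (m - i).choose j : ℕ) * ((1 + i) ^ (t - 1) * t ^ i) *
          w ^ j * (y + m - i) ^ (n - t) * (z + n - t) ^ (m - i - j) := by
        refine sum_congr rfl fun t _ => sum_congr rfl fun i _ => ?_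
        rw [show z + w + n - t = w + (z + n - t) by ring, add_pow w, mul_sum]
        refine sum_congr rfl fun j _ => ?_
        push_cast
        ring
    _ = _ := by
        rw [sum_congr rfl fun t _ => sum_range_sum_range_sub_comm m _, sum_comm]
        refine sum_congr rfl fun j hj => sum_congr rfl fun t _ => sum_congr rfl fun i _ => ?_
        have hjm : j ≤ m := Nat.lt_succ_iff.mp (mem_range.mp hj)
        rw [Nat.choose_mul_choose_sub_comm, Nat.sub_right_comm]
        push_cast [hjm]
        ring

theorem abelClosedForm_add_left (n m : ℕ) (y w z : ℤ) :
    abelClosedForm n m (y + w) z =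
      ∑ j ∈ range (n + 1), n.choose j * w ^ j * abelClosedForm (n - j) m y (z + j) := by
  rw [abelClosedForm, show 1 + (y + w) + m = w + (1 + y + m) by ring, add_pow w, sum_mul]
  refine sum_congr rfl fun j hj => ?_
  push_cast [abelClosedForm, Nat.lt_succ_iff.mp (mem_range.mp hj)]
  ring

theorem abelClosedForm_add_right (n m : ℕ) (y z w : ℤ) :
    abelClosedForm n m y (z + w) =
      ∑ j ∈ range (m + 1), m.choose j * w ^ j * abelClosedForm n (m - j) (y + j) z := by
  rw [abelClosedForm, show z + w + n = w + (z + n) by ring, add_pow w, mul_sum]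
  refine sum_congr rfl fun j hj => ?_
  push_cast [abelClosedForm, Nat.lt_succ_iff.mp (mem_range.mp hj)]
  ring

theorem abelSum_eq_zero_of_le {n m : ℕ} (hnm : n ≤ m) (hm : 1 ≤ m) (y : ℤ) :
    abelSum n m y (-n) = 0 := by
  refine sum_eq_zero fun t ht => ?_
  have htn : t ≤ n := Nat.lt_succ_iff.mp (mem_range.mp ht)
  set P : ℤ[X] := (X + 1) ^ (t - 1) * (C (y + m) - X) ^ (n - t)
  have hterm : ∀ i ∈ range (m + 1),
      n.choose t * m.choose i * ((1 + i) ^ (t - 1) * t ^ i) * (y + m - i) ^ (n - t) *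
        (-n + n - t : ℤ) ^ (m - i) =
      (n.choose t * t ^ m : ℤ) * ((-1) ^ (m - i) * m.choose i * P.eval (i : ℤ)) := by
    intro i hi
    rw [show (-n + n - t : ℤ) = -t by ring, neg_pow,
      ← pow_mul_pow_sub (t : ℤ) (Nat.lt_succ_iff.mp (mem_range.mp hi))]
    simp only [P, eval_mul, eval_pow, eval_add, eval_sub, eval_X, eval_C, eval_one]
    ring
  rw [sum_congr rfl hterm, ← mul_sum]
  rcases t.eq_zero_or_pos with rfl | ht
  · simp [zero_pow (by omega : m ≠ 0)]
  · have hP : P.natDegree < m :=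
      lt_of_le_of_lt (by simp only [P]; compute_degree) (show t - 1 + (n - t) < m by omega)
    rw [sum_neg_one_pow_mul_choose_mul_eval_eq_zero hP, mul_zero]

/-- At `t = 0` the truncated exponent `t - 1 = 0` does no harm: either `i = 0` and the base is
`1`, or `t ^ i = 0`. -/
theorem one_add_pow_pred_mul_pow_mul_one_add_pow (i : ℕ) {t n : ℕ} (htn : t ≤ n) (hn : 1 ≤ n) :
    (1 + i : ℤ) ^ (t - 1) * t ^ i * (1 + i) ^ (n - t) = (1 + i) ^ (n - 1) * t ^ i := by
  rcases t with _ | t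
  · rcases i with _ | i <;> simp
  · rw [mul_right_comm, ← pow_add]
    congr 2
    omega

theorem abelSum_eq_zero_of_lt {n m : ℕ} (hmn : m < n) (z : ℤ) :
    abelSum n m (-1 - m) z = 0 := by
  rw [abelSum, sum_comm]
  refine sum_eq_zero fun i hi => ?_
  have him : i ≤ m := Nat.lt_succ_iff.mp (mem_range.mp hi)
  set Q : ℤ[X] := X ^ i * (C (z + n) - X) ^ (m - i)
  have hterm : ∀ t ∈ range (n + 1),
      n.choose t * m.choose i * ((1 + i) ^ (t - 1) * t ^ i) * (-1 - m + m - i : ℤ) ^ (n - t) *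
        (z + n - t) ^ (m - i) =
      (m.choose i * (1 + i) ^ (n - 1) : ℤ) * ((-1) ^ (n - t) * n.choose t * Q.eval (t : ℤ)) := by
    intro t ht
    have key := one_add_pow_pred_mul_pow_mul_one_add_pow i (Nat.lt_succ_iff.mp (mem_range.mp ht))
      (by omega : 1 ≤ n)
    rw [show (-1 - m + m - i : ℤ) = -(1 + i) by ring, neg_pow]
    simp only [Q, eval_mul, eval_pow, eval_sub, eval_X, eval_C]
    linear_combination (n.choose t * m.choose i * (-1) ^ (n - t) * (z + n - t) ^ (m - i) : ℤ) * key
  rw [sum_congr rfl hterm, ← mul_sum, sum_neg_one_pow_mul_choose_mul_eval_eq_zero, mul_zero]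
  exact lt_of_le_of_lt (by simp only [Q]; compute_degree) (show i + (m - i) < n by omega)

theorem abelSum_eq_abelClosedForm (n m : ℕ) (y z : ℤ) :
    abelSum n m y z = abelClosedForm n m y z := by
  induction h : n + m using Nat.strong_induction_on generalizing n m y z with
  | _ s ih =>
  subst h
  rcases lt_or_ge m n with hmn | hnm
  · rw [show y = -1 - m + (y + 1 + m) by ring, abelSum_add_left, abelClosedForm_add_left]
    refine sum_congr rfl fun j hj => congrArg _ ?_
    rcases j.eq_zero_or_pos with rfl | hj0
    · rw [Nat.sub_zero, Nat.cast_zero, add_zero, abelSum_eq_zero_of_lt hmn, abelClosedForm,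
        show (1 + (-1 - m) + m : ℤ) = 0 by ring, zero_pow (by omega), zero_mul]
    · exact ih _ (by have := mem_range.mp hj; omega) _ _ _ _ rfl
  rcases m.eq_zero_or_pos with rfl | hm
  · obtain rfl : n = 0 := by omega
    simp [abelSum, abelClosedForm]
  rw [show z = -n + (z + n) by ring, abelSum_add_right, abelClosedForm_add_right]
  refine sum_congr rfl fun j hj => congrArg _ ?_
  rcases j.eq_zero_or_pos with rfl | hj0
  · rw [Nat.sub_zero, Nat.cast_zero, add_zero, abelSum_eq_zero_of_le hnm hm, abelClosedForm,
      show (-n + n : ℤ) = 0 by ring, zero_pow (by omega), mul_zero]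
  · exact ih _ (by have := mem_range.mp hj; omega) _ _ _ _ rfl

theorem sum_choose_mul_pow_eq_pow_mul_pow (K n : ℕ) :
    ∑ t ∈ range (n + 1), ∑ i ∈ range (K + 1), n.choose t * K.choose i *
        ((i + 1) ^ (t - 1) * t ^ i) * (K - i) ^ (n - t) * (n - t) ^ (K - i) =
      (K + 1) ^ n * n ^ K := by
  apply Nat.cast_injective (R := ℤ)
  calc _ = abelSum n K 0 0 := by
        push_cast
        refine sum_congr rfl fun t ht => sum_congr rfl fun i hi => ?_
        push_cast [Nat.lt_succ_iff.mp (mem_range.mp ht), Nat.lt_succ_iff.mp (mem_range.mp hi)]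
        ring
    _ = _ := by
        rw [abelSum_eq_abelClosedForm, abelClosedForm]
        push_cast
        ring

theorem Monotone.apply_find_eq {φ : ℕ → ℕ} (hφ : Monotone φ) (h : ∃ i, φ i ≤ i) :
    φ (Nat.find h) = Nat.find h := by
  refine le_antisymm (Nat.find_spec h) ?_
  rcases (Nat.find h).eq_zero_or_pos with h0 | hpos
  · rw [h0]
    exact Nat.zero_le _
  · have hmin := Nat.find_min h (Nat.sub_lt hpos one_pos)
    have hle := hφ (Nat.sub_le (Nat.find h) 1)
    omega

theorem Finset.eq_of_sum_mul_eq_sum_mul {ι : Type*} [DecidableEq ι] {s : Finset ι} {a : ι}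
    (ha : a ∈ s) {w X Y : ι → ℕ} (hw : w a = 1) (hXY : ∀ b ∈ s, b ≠ a → X b = Y b)
    (h : ∑ b ∈ s, w b * X b = ∑ b ∈ s, w b * Y b) : X a = Y a := by
  rw [← add_sum_erase s _ ha, ← add_sum_erase s _ ha, hw,
    sum_congr rfl fun b hb => by rw [hXY b (mem_of_mem_erase hb) (ne_of_mem_erase hb)]] at h
  simpa using h

theorem Fintype.sum_finset_apply_card {α M : Type*} [Fintype α] [AddCommMonoid M] (f : ℕ → M) :
    ∑ s : Finset α, f #s = ∑ t ∈ range (Fintype.card α + 1), (Fintype.card α).choose t • f t := by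
  rw [← powerset_univ, sum_powerset_apply_card, card_univ]

def Equiv.subtypeIffMemEquiv {α γ : Type*} [DecidableEq α] (T : Finset α) (p : γ → Prop) :
    {f : α → γ // ∀ x, x ∈ T ↔ p (f x)} ≃ (T → {c // p c}) × ({x // x ∉ T} → {c // ¬ p c}) :=
  (Equiv.subtypePiEquivPi (p := fun x c => x ∈ T ↔ p c)).trans <|
    (Equiv.piEquivPiSubtypeProd (· ∈ T) _).trans <|
    (Equiv.piCongrRight fun x => Equiv.subtypeEquivRight fun c => by simp [x.2]).prodCongr
      (Equiv.piCongrRight fun x => Equiv.subtypeEquivRight fun c => by simp [x.2])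

section Polyomino

variable {α α' β β' : Type*} [Fintype α] [Fintype α'] [Fintype β] [Fintype β']

def countLT (f : α → ℕ) (s : ℕ) : ℕ := Fintype.card {x // f x < s}

theorem countLT_mono (f : α → ℕ) : Monotone (countLT f) :=
  fun _ _ hs => Fintype.card_subtype_mono _ _ fun _ hx => lt_of_lt_of_le hx hs

theorem countLT_le_card (f : α → ℕ) (s : ℕ) : countLT f s ≤ Fintype.card α :=
  Fintype.card_subtype_le _

theorem countLT_comp_equiv (f : α → ℕ) (e : α' ≃ α) (s : ℕ) : countLT (f ∘ e) s = countLT f s :=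
  Fintype.card_congr (e.subtypeEquiv fun _ => Iff.rfl)

theorem countLT_eq_card {f : α → ℕ} {s : ℕ} {T : Finset α} (hT : ∀ x, x ∈ T ↔ f x < s) :
    countLT f s = #T := by
  rw [countLT, Fintype.card_subtype]
  congr 1
  ext x
  simp [hT]

theorem countLT_subtype {f : α → ℕ} {s₀ s : ℕ} {T : Finset α}
    (hT : ∀ x, f x < s₀ → x ∈ T) (hs : s ≤ s₀) :
    countLT (fun x : T => f x) s = countLT f s :=
  Fintype.card_congr <| Equiv.subtypeSubtypeEquivSubtype fun hx => hT _ (lt_of_lt_of_le hx hs)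

/-- `countLT g (i + 1)` is the height of the upper path after column `i`, and `countLT h s` the
number of labelled lower east steps below height `s`; so this is the paper's condition
`h↑ i < #{m | g m ≤ i}` that the lower path stays strictly below the upper one. -/
def IsPolyomino (g : α → ℕ) (h : β → ℕ) : Prop :=
  ∀ i < Fintype.card β, i < countLT h (countLT g (i + 1))

theorem isPolyomino_comp_equiv (g : α → ℕ) (h : β → ℕ) (eα : α' ≃ α) (eβ : β' ≃ β) :
    IsPolyomino (g ∘ eα) (h ∘ eβ) ↔ IsPolyomino g h := by
  simp only [IsPolyomino, countLT_comp_equiv, Fintype.card_congr eβ]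

theorem exists_countLT_countLT_le (g : α → ℕ) (h : β → ℕ) :
    ∃ i, countLT h (countLT g (i + 1)) ≤ i :=
  ⟨Fintype.card β, countLT_le_card _ _⟩

def crossing (g : α → ℕ) (h : β → ℕ) : ℕ := Nat.find (exists_countLT_countLT_le g h)

theorem countLT_countLT_crossing (g : α → ℕ) (h : β → ℕ) :
    countLT h (countLT g (crossing g h + 1)) = crossing g h :=
  Monotone.apply_find_eq (fun _ _ hij => countLT_mono h (countLT_mono g (by omega)))
    (exists_countLT_countLT_le g h)

theorem lt_countLT_countLT_of_lt_crossing {g : α → ℕ} {h : β → ℕ} {i : ℕ}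
    (hi : i < crossing g h) : i < countLT h (countLT g (i + 1)) :=
  not_le.1 (Nat.find_min (exists_countLT_countLT_le g h) hi)

def crossingBlock (g : α → ℕ) (h : β → ℕ) : Finset α × Finset β :=
  (({x | g x < crossing g h + 1} : Finset α), ({y | h y < countLT g (crossing g h + 1)} : Finset β))

theorem isPolyomino_subtype_iff {g : α → ℕ} {h : β → ℕ} {T : Finset α} {H : Finset β}
    (hT : ∀ x, x ∈ T ↔ g x < #H + 1) (hH : ∀ y, y ∈ H ↔ h y < #T) :
    IsPolyomino (fun x : T => g x) (fun y : H => h y) ↔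
      ∀ i < #H, i < countLT h (countLT g (i + 1)) := by
  rw [IsPolyomino, Fintype.card_coe]
  refine forall₂_congr fun i hi => ?_
  have hg : countLT g (i + 1) ≤ #T :=
    countLT_eq_card hT ▸ countLT_mono g (by omega)
  rw [countLT_subtype (fun x => (hT x).2) (by omega : i + 1 ≤ #H + 1),
    countLT_subtype (fun y => (hH y).2) hg]

theorem crossingBlock_eq_iff {g : α → ℕ} {h : β → ℕ} {T : Finset α} {H : Finset β} :
    crossingBlock g h = (T, H) ↔ (∀ x, x ∈ T ↔ g x < #H + 1) ∧ (∀ y, y ∈ H ↔ h y < #T) ∧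
      IsPolyomino (fun x : T => g x) (fun y : H => h y) := by
  constructor
  · intro hTH
    simp only [crossingBlock, Prod.mk.injEq] at hTH
    have hT : ∀ x, x ∈ T ↔ g x < crossing g h + 1 := by simp [← hTH.1]
    have hH : ∀ y, y ∈ H ↔ h y < #T := by simp [← hTH.2, countLT_eq_card hT]
    have hc : #H = crossing g h := by
      rw [← countLT_eq_card hH, ← countLT_eq_card hT, countLT_countLT_crossing]
    rw [hc]
    exact ⟨hT, hH, (isPolyomino_subtype_iff (hc ▸ hT) hH).2 fun _ hi =>
      lt_countLT_countLT_of_lt_crossing (hc ▸ hi)⟩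
  · rintro ⟨hT, hH, hP⟩
    have hTc := countLT_eq_card hT
    have hHc := countLT_eq_card hH
    have hc : crossing g h = #H := (Nat.find_eq_iff _).2
      ⟨by rw [hTc, hHc], fun i hi => not_le.2 ((isPolyomino_subtype_iff hT hH).1 hP i hi)⟩
    simp only [crossingBlock, hc, hTc, Prod.mk.injEq]
    constructor <;> ext <;> simp [hT, hH]

end Polyomino

noncomputable def polyominoCount (K n : ℕ) : ℕ :=
  Nat.card {p : (Fin n → Fin (K + 1)) × (Fin K → Fin n) //
    IsPolyomino (fun x => (p.1 x : ℕ)) (fun y => (p.2 y : ℕ))}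

theorem card_isPolyomino_subtype_lt {α β : Type*} [Fintype α] [Fintype β] {K n N M : ℕ}
    (hK : K + 1 ≤ N) (hn : n ≤ M) (hα : Fintype.card α = n) (hβ : Fintype.card β = K) :
    Nat.card {p : (α → {c : Fin N // (c : ℕ) < K + 1}) × (β → {c : Fin M // (c : ℕ) < n}) //
      IsPolyomino (fun x => ((p.1 x : Fin N) : ℕ)) (fun y => ((p.2 y : Fin M) : ℕ))} =
      polyominoCount K n := by
  let eα := Fintype.equivFinOfCardEq hα
  let eβ := Fintype.equivFinOfCardEq hβ
  exact Nat.card_congr <| Equiv.subtypeEquiv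
    ((Equiv.arrowCongr eα (Fin.castLEquiv hK).symm).prodCongr
      (Equiv.arrowCongr eβ (Fin.castLEquiv hn).symm))
    fun _ => (isPolyomino_comp_equiv _ _ eα.symm eβ.symm).symm

theorem card_fin_not_lt {N s : ℕ} (h : s ≤ N) : Nat.card {c : Fin N // ¬ (c : ℕ) < s} = N - s := by
  rw [Nat.card_eq_fintype_card, Fintype.card_subtype_compl, ← Fintype.card_congr (Fin.castLEquiv h),
    Fintype.card_fin, Fintype.card_fin]

theorem card_crossingBlock_fiber {K n : ℕ} (T : Finset (Fin n)) (H : Finset (Fin K)) :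
    Nat.card {p : (Fin n → Fin (K + 1)) × (Fin K → Fin n) //
      crossingBlock (fun x => (p.1 x : ℕ)) (fun y => (p.2 y : ℕ)) = (T, H)} =
      polyominoCount #H #T * ((K - #H) ^ (n - #T) * (n - #T) ^ (K - #H)) := by
  have hH : #H ≤ K := by simpa using card_le_univ H
  have hT : #T ≤ n := by simpa using card_le_univ T
  let A (g : Fin n → Fin (K + 1)) : Prop := ∀ x, x ∈ T ↔ (g x : ℕ) < #H + 1
  let B (h : Fin K → Fin n) : Prop := ∀ y, y ∈ H ↔ (h y : ℕ) < #T
  let P (g : T → Fin (K + 1)) (h : H → Fin n) : Prop :=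
    IsPolyomino (fun x => (g x : ℕ)) (fun y => (h y : ℕ))
  let eg := Equiv.subtypeIffMemEquiv T fun c : Fin (K + 1) => (c : ℕ) < #H + 1
  let eh := Equiv.subtypeIffMemEquiv H fun c : Fin n => (c : ℕ) < #T
  have e₁ : {p : (Fin n → Fin (K + 1)) × (Fin K → Fin n) //
        crossingBlock (fun x => (p.1 x : ℕ)) (fun y => (p.2 y : ℕ)) = (T, H)} ≃
      {p : (Fin n → Fin (K + 1)) × (Fin K → Fin n) //
        (A p.1 ∧ B p.2) ∧ P (fun x => p.1 x) (fun y => p.2 y)} :=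
    Equiv.subtypeEquivRight fun _ => crossingBlock_eq_iff.trans and_assoc.symm
  have e₂ : {p : (Fin n → Fin (K + 1)) × (Fin K → Fin n) //
        (A p.1 ∧ B p.2) ∧ P (fun x => p.1 x) (fun y => p.2 y)} ≃
      {q : Subtype A × Subtype B // P (fun x => q.1.1 x) (fun y => q.2.1 y)} :=
    (Equiv.subtypeSubtypeEquivSubtypeInter
      (fun p : (Fin n → Fin (K + 1)) × (Fin K → Fin n) => A p.1 ∧ B p.2)
      (fun p => P (fun x => p.1 x) (fun y => p.2 y))).symm.trans <|
      Equiv.subtypeEquiv (Equiv.subtypeProdEquivProd (p := A) (q := B)) fun _ => Iff.rfl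
  have e₃ : {q : Subtype A × Subtype B // P (fun x => q.1.1 x) (fun y => q.2.1 y)} ≃
      {u : (T → {c : Fin (K + 1) // (c : ℕ) < #H + 1}) × (H → {c : Fin n // (c : ℕ) < #T}) //
          P (fun x => u.1 x) (fun y => u.2 y)} ×
        (({x // x ∉ T} → {c : Fin (K + 1) // ¬ (c : ℕ) < #H + 1}) ×
          ({y // y ∉ H} → {c : Fin n // ¬ (c : ℕ) < #T})) :=
    (Equiv.subtypeEquiv ((eg.prodCongr eh).trans (Equiv.prodProdProdComm _ _ _ _))
      fun _ => Iff.rfl).trans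
      (Equiv.prodSubtypeFstEquivSubtypeProd (p := fun u => P (fun x => u.1 x) (fun y => u.2 y)))
  rw [Nat.card_congr (e₁.trans (e₂.trans e₃)), Nat.card_prod,
    card_isPolyomino_subtype_lt (by omega) hT (Fintype.card_coe T) (Fintype.card_coe H),
    Nat.card_prod, Nat.card_fun, Nat.card_fun, card_fin_not_lt (by omega), card_fin_not_lt hT]
  simp [Nat.card_eq_fintype_card, Fintype.card_subtype_compl]

theorem pow_mul_pow_eq_sum_polyominoCount (K n : ℕ) :
    (K + 1) ^ n * n ^ K = ∑ t ∈ range (n + 1), ∑ i ∈ range (K + 1),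
      n.choose t * K.choose i * polyominoCount i t * (K - i) ^ (n - t) * (n - t) ^ (K - i) := by
  calc (K + 1) ^ n * n ^ K = Nat.card ((Fin n → Fin (K + 1)) × (Fin K → Fin n)) := by
        simp only [Nat.card_eq_fintype_card, Fintype.card_prod, Fintype.card_pi, Fintype.card_fin,
          prod_const, card_univ]
    _ = ∑ TH : Finset (Fin n) × Finset (Fin K),
          Nat.card {p : (Fin n → Fin (K + 1)) × (Fin K → Fin n) //
            crossingBlock (fun x => (p.1 x : ℕ)) (fun y => (p.2 y : ℕ)) = TH} := by
        rw [← Nat.card_sigma]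
        exact Nat.card_congr (Equiv.sigmaFiberEquiv _).symm
    _ = ∑ T : Finset (Fin n), ∑ H : Finset (Fin K),
          polyominoCount #H #T * ((K - #H) ^ (n - #T) * (n - #T) ^ (K - #H)) := by
        rw [Fintype.sum_prod_type]
        exact sum_congr rfl fun T _ => sum_congr rfl fun H _ => card_crossingBlock_fiber T H
    _ = _ := by
        rw [sum_congr rfl fun T _ => Fintype.sum_finset_apply_card fun i =>
            polyominoCount i #T * ((K - i) ^ (n - #T) * (n - #T) ^ (K - i)),
          Fintype.sum_finset_apply_card fun t => ∑ i ∈ range (Fintype.card (Fin K) + 1),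
            (Fintype.card (Fin K)).choose i •
              (polyominoCount i t * ((K - i) ^ (n - t) * (n - t) ^ (K - i)))]
        simp only [Fintype.card_fin, smul_eq_mul, mul_sum]
        refine sum_congr rfl fun t _ => sum_congr rfl fun i _ => ?_
        ring

theorem polyominoCount_eq (K n : ℕ) : polyominoCount K n = (K + 1) ^ (n - 1) * n ^ K := by
  induction h : K + n using Nat.strong_induction_on generalizing K n with
  | _ s ih =>
  subst h
  refine eq_of_sum_mul_eq_sum_mul (s := range (n + 1) ×ˢ range (K + 1)) (a := (n, K))
    (w := fun b => n.choose b.1 * K.choose b.2 * ((K - b.2) ^ (n - b.1) * (n - b.1) ^ (K - b.2)))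
    (X := fun b => polyominoCount b.2 b.1) (Y := fun b => (b.2 + 1) ^ (b.1 - 1) * b.1 ^ b.2)
    (by simp) (by simp) ?_ ?_
  · rintro ⟨t, i⟩ hb hne
    simp only [mem_product, mem_range, ne_eq, Prod.mk.injEq] at hb hne
    exact ih (i + t) (by omega) i t rfl
  · rw [sum_product, sum_product]
    trans (K + 1) ^ n * n ^ K
    · rw [pow_mul_pow_eq_sum_polyominoCount]
      exact sum_congr rfl fun t _ => sum_congr rfl fun i _ => by ring
    · rw [← sum_choose_mul_pow_eq_pow_mul_pow]
      exact sum_congr rfl fun t _ => sum_congr rfl fun i _ => by ring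

theorem Monotone.lt_iff_lt_countLT {K : ℕ} {f : Fin K → ℕ} (hf : Monotone f) (i : Fin K) (c : ℕ) :
    f i < c ↔ (i : ℕ) < countLT f c := by
  rw [countLT, Fintype.card_subtype]
  constructor
  · intro hi
    calc (i : ℕ) < #(Iic i) := by rw [Fin.card_Iic]; omega
      _ ≤ _ := card_le_card fun j hj => by
        simpa using lt_of_le_of_lt (hf (mem_Iic.1 hj)) hi
  · intro hi
    by_contra hc
    have : #{j | f j < c} ≤ #(Iio i) := card_le_card fun j hj => by
      simp only [mem_filter, mem_univ, true_and] at hj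
      exact mem_Iio.2 (lt_of_not_ge fun hij => hc (lt_of_le_of_lt (hf hij) hj))
    rw [Fin.card_Iio] at this
    omega

theorem forall_sort_lt_iff_isPolyomino {K n : ℕ} (g : Fin n → Fin (K + 1)) (h : Fin K → Fin n) :
    (∀ i : Fin K, ((h ∘ Tuple.sort h) i : ℕ) < #{m | (g m : ℕ) ≤ i}) ↔
      IsPolyomino (fun x => (g x : ℕ)) (fun y => (h y : ℕ)) := by
  have hg (i : ℕ) : #{m | (g m : ℕ) ≤ i} = countLT (fun x => (g x : ℕ)) (i + 1) := by
    rw [countLT, Fintype.card_subtype]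
    simp
  have hh (i : Fin K) (c : ℕ) :
      ((h ∘ Tuple.sort h) i : ℕ) < c ↔ (i : ℕ) < countLT (fun y => (h y : ℕ)) c := by
    have hmono : Monotone fun j => ((h ∘ Tuple.sort h) j : ℕ) :=
      Fin.val_strictMono.monotone.comp (Tuple.monotone_sort h)
    rw [hmono.lt_iff_lt_countLT, ← countLT_comp_equiv (fun y => (h y : ℕ)) (Tuple.sort h)]
    rfl
  simp only [IsPolyomino, Fintype.card_fin, hg, hh]
  exact ⟨fun H i hi => H ⟨i, hi⟩, fun H i => H i i.2⟩

theorem stmt7_general (k n : ℕ) (hk : 1 ≤ k) :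
    Nat.card {p : (Fin n → Fin k) × (Fin (k - 1) → Fin n) //
        ∀ i : Fin (k - 1),
          ((p.2 ∘ Tuple.sort p.2) i : ℕ) <
            (Finset.univ.filter fun m : Fin n => (p.1 m : ℕ) ≤ (i : ℕ)).card} =
      k ^ (n - 1) * n ^ (k - 1) := by
  obtain ⟨K, rfl⟩ : ∃ K, k = K + 1 := ⟨k - 1, by omega⟩
  simp only [Nat.add_sub_cancel]
  rw [← polyominoCount_eq]
  exact Nat.card_congr (Equiv.subtypeEquivRight fun p => forall_sort_lt_iff_isPolyomino p.1 p.2)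

/-- The number of doubly labelled parallelogram polyominoes with fixed sink of
width `k` and height `n`, encoded as pairs `(g, h)` with `g : Fin n → Fin k` the
column of each north-step label, `h : Fin (k-1) → Fin n` the height of each
labelled east step of the lower path, and the weakly increasing rearrangement
`h↑ = h ∘ Tuple.sort h` satisfying `h↑ i < #{m : g m ≤ i}`, equals
`k^(n-1) * n^(k-1)`, the number of spanning trees of `K_{k,n}`. -/
theorem stmt7 (k n : ℕ) (hk : 1 ≤ k) (hn : 1 ≤ n) :
    Nat.card {p : (Fin n → Fin k) × (Fin (k - 1) → Fin n) //
        ∀ i : Fin (k - 1),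
          ((p.2 ∘ Tuple.sort p.2) i : ℕ) <
            (Finset.univ.filter fun m : Fin n => (p.1 m : ℕ) ≤ (i : ℕ)).card} =
      k ^ (n - 1) * n ^ (k - 1) :=
  stmt7_general k n hk
end

section
/- Fix natural numbers k ≥ 1 and n ≥ 1, let σ be a permutation of Fin n and τ a permutation of Fin (k-1). Let S be the set of pairs (g, h) where g : Fin n → Fin k, h : Fin (k-1) → Fin n, and, denoting by h↑ the weakly increasing rearrangement of h, for every i : Fin (k-1) one has (h↑ i : ℕ) < card { m : Fin n | (g m : ℕ) ≤ (i : ℕ) }. Let c(σ) be the number of orbits of σ on Fin n and c(τ) the number of orbits of τ on Fin (k-1). Then card { (g, h) ∈ S | g ∘ σ = g and h ∘ τ = h } = k^(c(σ)-1) · n^(c(τ)). -/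
/-!
Cycle lemma. Cutting a pair `(g, h)` at column `c` (shift `g` by `-c` and `h` by minus the number
of north steps left of `c`) is a free action of `ℤ/k` on all pairs, commuting with `σ × τ`.
Unrolling both paths periodically, the cut at `c` is admissible iff `c` dominates the next `k - 1`
values of `z x = x - U (x - 1)`, where `U` is the periodic height count; since
`z (x + k) = z x + 1`, exactly one `c ∈ [0, k)` does. So the fixed admissible pairs are a `1/k`
fraction of all fixed pairs, i.e. of the pairs of functions constant on cycles: `k^c(σ) n^c(τ)`.
-/

open Finset

theorem Int.neg_one_sub_ediv {a K : ℤ} (hK : 0 < K) : (-1 - a) / K = -(a / K) - 1 := by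
  rw [Int.ediv_eq_iff_of_pos hK]
  have h1 := Int.ediv_mul_le a hK.ne'
  have h2 := Int.lt_ediv_add_one_mul_self a hK
  constructor <;> linarith

section PeriodicCount

variable {ι : Type*} [Fintype ι]

-- Counting function of the `K`-periodic family `v + Kℤ`, normalised to vanish at `-1` when all
-- `v i ∈ [0, K)`.
def periodicCount (K : ℕ) (v : ι → ℤ) (x : ℤ) : ℤ :=
  ∑ i, ((x - v i) / K + 1)

variable {K : ℕ} (v : ι → ℤ)

theorem periodicCount_add_period [NeZero K] (x : ℤ) :
    periodicCount K v (x + K) = periodicCount K v x + Fintype.card ι := by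
  have hK : (K : ℤ) ≠ 0 := by exact_mod_cast NeZero.ne K
  have hterm (i : ι) : (x + K - v i) / K + 1 = ((x - v i) / K + 1) + 1 := by
    rw [add_sub_right_comm, Int.add_ediv_of_dvd_right (dvd_refl _), Int.ediv_self hK]
  simp [periodicCount, hterm, sum_add_distrib]

theorem periodicCount_eq_card {x : ℤ} (hv : ∀ i, 0 ≤ v i ∧ v i < K) (hx₀ : -1 ≤ x)
    (hxK : x < K) : periodicCount K v x = #{i | v i ≤ x} := by
  rw [card_filter, Nat.cast_sum, periodicCount]
  refine sum_congr rfl fun i _ => ?_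
  obtain ⟨hv₀, hvK⟩ := hv i
  have hK : (0 : ℤ) < K := by omega
  split_ifs with hi
  · rw [Int.ediv_eq_zero_of_lt (by omega) (by omega)]; simp
  · rw [(Int.ediv_eq_iff_of_pos (y := -1) hK).2 (by omega)]; simp

theorem periodicCount_translate [NeZero K] {v' : ι → ℤ} {d : ℤ}
    (hv' : ∀ i, v' i = (v i + d) % K) (x : ℤ) :
    periodicCount K v' x = periodicCount K v (x - d) - periodicCount K v (-1 - d) := by
  have hK : (0 : ℤ) < K := by exact_mod_cast Nat.pos_of_neZero K
  rw [periodicCount, periodicCount, periodicCount, ← sum_sub_distrib]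
  refine sum_congr rfl fun i _ => ?_
  have hx : x - v' i = x - (v i + d) + K * ((v i + d) / K) := by
    rw [hv', Int.emod_def]; ring
  rw [hx, Int.add_mul_ediv_left _ _ hK.ne', sub_sub, sub_sub, add_comm d, Int.neg_one_sub_ediv hK]
  ring

end PeriodicCount

theorem Fin.intCast_val_sub {K : ℕ} (a b : Fin K) :
    (((a - b : Fin K) : ℕ) : ℤ) = ((a : ℤ) - b) % K := by
  have := a.isLt
  rw [Fin.intCast_val_sub_eq_sub_add_ite]
  split_ifs with h <;> push_cast
  · rw [add_zero, Int.emod_eq_of_lt] <;> omega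
  · rw [← Int.add_emod_right, Int.emod_eq_of_lt] <;> omega

theorem Fin.intCast_val_sub_ofNat {K : ℕ} [NeZero K] (a : Fin K) (s : ℕ) :
    (((a - Fin.ofNat K s : Fin K) : ℕ) : ℤ) = ((a : ℤ) - s) % K := by
  rw [Fin.intCast_val_sub, Fin.val_ofNat, Int.natCast_mod, Int.sub_emod_emod]

theorem Tuple.antitone_comp_sort_iff {K : ℕ} {α : Type*} [LinearOrder α] (f : Fin K → α)
    {P : α → Prop} [DecidablePred P] (hP : Antitone P) (i : Fin K) :
    P (f (Tuple.sort f i)) ↔ (i : ℕ) + 1 ≤ #{j | P (f j)} := by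
  have hcard : #{j | P (f j)} = #{j | P (f (Tuple.sort f j))} :=
    card_equiv (Tuple.sort f).symm (by simp)
  have hmono := Tuple.monotone_sort f
  rw [hcard]
  constructor
  · intro hi
    calc (i : ℕ) + 1 = #(Iic i) := (Fin.card_Iic i).symm
      _ ≤ _ := card_le_card fun j hj =>
        mem_filter.2 ⟨mem_univ _, hP (hmono (mem_Iic.1 hj)) hi⟩
  · intro hcard
    by_contra hi
    have hsub : ({j | P (f (Tuple.sort f j))} : Finset (Fin K)) ⊆ Iio i := fun j hj =>
      mem_Iio.2 (lt_of_not_ge fun hij => hi (hP (hmono hij) (mem_filter.1 hj).2))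
    have := (card_le_card hsub).trans_eq (Fin.card_Iio i)
    omega

theorem apply_add_mul_of_add_period {K : ℤ} {z : ℤ → ℤ} (hz : ∀ x, z (x + K) = z x + 1)
    (x q : ℤ) :
    z (x + q * K) = z x + q := by
  induction q using Int.induction_on with
  | zero => simp
  | succ q ih => rw [add_mul, one_mul, ← add_assoc, hz, ih, add_assoc]
  | pred q ih =>
    have := hz (x + (-q - 1) * K)
    rw [add_assoc, ← add_one_mul, sub_add_cancel, ih] at this
    linarith

theorem existsUnique_dominant (K : ℕ) [NeZero K] {z : ℤ → ℤ}
    (hz : ∀ x, z (x + K) = z x + 1) :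
    ∃! c : Fin K, ∀ b : ℤ, c < b → b < c + K → z b ≤ z c := by
  have hK : (0 : ℤ) < K := by exact_mod_cast Nat.pos_of_neZero K
  -- `F` is `K`-periodic, and its maximisers are exactly the dominant points.
  set F : ℤ → ℤ := fun b => K * z b - b
  have hF (b : ℤ) : ∃ c : Fin K, F b = F c := by
    refine ⟨⟨(b % K).toNat, by have := Int.emod_lt_of_pos b hK; omega⟩, ?_⟩
    have hb := Int.emod_add_ediv_mul b K
    have := apply_add_mul_of_add_period hz (b % K) (b / K)
    rw [hb] at this
    simp only [F, Int.toNat_of_nonneg (Int.emod_nonneg b hK.ne'), this]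
    linear_combination hb
  have dominant (c : Fin K) (hc : ∀ c' : Fin K, F c' ≤ F c) :
      ∀ b : ℤ, c < b → b < c + K → z b ≤ z c := by
    intro b hb₁ hb₂
    obtain ⟨c', hc'⟩ := hF b
    have := hc c'
    simp only [F] at this hc'
    by_contra! h
    nlinarith
  have not_lt_of_dominant (c c' : Fin K) (hc : ∀ b : ℤ, c < b → b < c + K → z b ≤ z c)
      (hc' : ∀ b : ℤ, c' < b → b < c' + K → z b ≤ z c') : ¬ (c : ℤ) < c' := by
    intro hlt
    have := hc c' hlt (by omega)
    have := hc' (c + K) (by omega) (by omega)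
    have := hz c
    omega
  obtain ⟨c, hc⟩ := Finite.exists_max fun c : Fin K => F c
  refine ⟨c, dominant c hc, fun c' hc' => Fin.ext ?_⟩
  have := not_lt_of_dominant c c' (dominant c hc) hc'
  have := not_lt_of_dominant c' c hc' (dominant c hc)
  omega

theorem Nat.card_eq_mul_of_existsUnique {α C : Type*} (e : C → α ≃ α) {P Q : α → Prop}
    (hQ : ∀ c a, Q (e c a) ↔ Q a) (hP : ∀ a, ∃! c, P (e c a)) :
    Nat.card {a // Q a} = Nat.card C * Nat.card {a // P a ∧ Q a} := by
  choose c hc hc_unique using hP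
  rw [← Nat.card_prod]
  refine Nat.card_congr
    { toFun a := (c a, ⟨e (c a) a, hc a, (hQ _ _).2 a.2⟩)
      invFun b := ⟨(e b.1).symm b.2, (hQ b.1 _).1 (by simpa using b.2.2.2)⟩
      left_inv a := by simp
      right_inv b := ?_ }
  obtain ⟨c', b, hb⟩ := b
  have : c ((e c').symm b) = c' := (hc_unique _ c' (by simpa using hb.1)).symm
  ext <;> simp [this]

theorem Equiv.Perm.comp_zpow_eq_self_s8 {α β : Type*} {g : α → β} {σ : Equiv.Perm α}
    (h : g ∘ σ = g) (t : ℤ) : g ∘ ⇑(σ ^ t) = g := by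
  induction t using Int.induction_on with
  | zero => simp
  | succ t ih => rw [zpow_add_one, Equiv.Perm.coe_mul, ← Function.comp_assoc, ih, h]
  | pred t ih =>
    rw [zpow_sub_one, Equiv.Perm.coe_mul, ← Function.comp_assoc, ih]
    calc g ∘ ⇑σ⁻¹ = (g ∘ σ) ∘ ⇑σ⁻¹ := by rw [h]
      _ = g := by ext; simp

theorem Equiv.Perm.natCard_comp_eq_self {α β : Type*} [Finite α] (σ : Equiv.Perm α) :
    Nat.card {g : α → β // g ∘ σ = g} =
      Nat.card β ^ Nat.card (MulAction.orbitRel.Quotient (Subgroup.zpowers σ) α) := by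
  rw [← Nat.card_fun, ← Nat.card_congr (Setoid.liftEquiv _)]
  refine Nat.card_congr (Equiv.subtypeEquivRight fun g => ⟨fun h x y hxy => ?_, fun h => ?_⟩)
  · obtain ⟨⟨_, t, rfl⟩, rfl⟩ := MulAction.orbitRel_apply.1 hxy
    exact congrFun (comp_zpow_eq_self_s8 h t) y
  · funext x
    exact h (MulAction.orbitRel_apply.2 ⟨⟨σ, Subgroup.mem_zpowers σ⟩, rfl⟩)

section Polyomino

variable {k n : ℕ} {ι : Type*}

def Admissible (g : Fin n → Fin k) (h : Fin (k - 1) → Fin n) : Prop :=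
  ∀ i : Fin (k - 1), ((h ∘ Tuple.sort h) i : ℕ) < #{m | (g m : ℕ) ≤ (i : ℕ)}

def heightCount [Fintype ι] (g : Fin n → Fin k) (h : ι → Fin n) (x : ℤ) : ℤ :=
  periodicCount n (fun j => (h j : ℤ)) (periodicCount k (fun m => (g m : ℤ)) x - 1)

theorem admissible_iff_le_heightCount (g : Fin n → Fin k) (h : Fin (k - 1) → Fin n) :
    Admissible g h ↔ ∀ i : Fin (k - 1), (i : ℤ) + 1 ≤ heightCount g h i := by
  refine forall_congr' fun i => ?_
  set V := #{m | (g m : ℕ) ≤ (i : ℕ)}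
  have hV : periodicCount k (fun m => (g m : ℤ)) i = V := by
    rw [periodicCount_eq_card _ (fun m => by simp) (by omega) (by omega)]
    simp [V]
  have hVn : V ≤ n := (card_filter_le _ _).trans_eq (card_fin n)
  have hH : heightCount g h i = #{j | (h j : ℕ) < V} := by
    rw [heightCount, hV, periodicCount_eq_card _ (fun j => by simp) (by omega) (by omega)]
    congr 2
    ext j
    simp only [mem_filter, mem_univ, true_and]
    omega
  rw [hH]
  refine (Tuple.antitone_comp_sort_iff h (P := fun a : Fin n => (a : ℕ) < V)
    (fun a b hab hb => lt_of_le_of_lt hab hb) i).trans ?_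
  omega

variable [NeZero k] [NeZero n]

-- Cut the cylinder at column `c`: columns are renumbered from `c`, heights from the number of
-- north steps in the columns before `c`.
def rotate (c : Fin k) :
    (Fin n → Fin k) × (ι → Fin n) ≃ (Fin n → Fin k) × (ι → Fin n) where
  toFun p := (fun m => p.1 m - c, fun j => p.2 j - Fin.ofNat n #{m | p.1 m < c})
  invFun p := (fun m => p.1 m + c, fun j => p.2 j + Fin.ofNat n #{m | p.1 m + c < c})
  left_inv p := by simp
  right_inv p := by simp

theorem rotate_comp_perm_iff (σ : Equiv.Perm (Fin n)) (τ : Equiv.Perm ι) (c : Fin k)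
    (p : (Fin n → Fin k) × (ι → Fin n)) :
    ((rotate c p).1 ∘ σ = (rotate c p).1 ∧ (rotate c p).2 ∘ τ = (rotate c p).2) ↔
      (p.1 ∘ σ = p.1 ∧ p.2 ∘ τ = p.2) := by
  simp [rotate, funext_iff]

variable [Fintype ι]

theorem heightCount_add_period (g : Fin n → Fin k) (h : ι → Fin n) (x : ℤ) :
    heightCount g h (x + k) = heightCount g h x + Fintype.card ι := by
  rw [heightCount, periodicCount_add_period, Fintype.card_fin, add_sub_right_comm,
    periodicCount_add_period, heightCount]

theorem heightCount_rotate (c : Fin k) (p : (Fin n → Fin k) × (ι → Fin n)) (x : ℤ) :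
    heightCount (rotate c p).1 (rotate c p).2 x =
      heightCount p.1 p.2 (x + c) - heightCount p.1 p.2 (c - 1) := by
  obtain ⟨g, h⟩ := p
  set s := #{m | g m < c}
  have hs : periodicCount k (fun m => (g m : ℤ)) (c - 1) = s := by
    rw [periodicCount_eq_card _ (fun m => by simp) (by omega) (by omega)]
    congr 2
    ext m
    simp only [mem_filter, mem_univ, true_and, Fin.lt_def]
    omega
  have hg (y : ℤ) : periodicCount k (fun m => ((g m - c : Fin k) : ℤ)) y =
      periodicCount k (fun m => (g m : ℤ)) (y + c) - s := by
    rw [periodicCount_translate _ (d := -c) (fun m => Fin.intCast_val_sub _ _), ← hs]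
    ring_nf
  simp only [heightCount, rotate, Equiv.coe_fn_mk]
  rw [hg, periodicCount_translate _ (d := -s) (fun j => Fin.intCast_val_sub_ofNat _ _), hs]
  ring_nf

theorem admissible_rotate_iff (c : Fin k) (p : (Fin n → Fin k) × (Fin (k - 1) → Fin n)) :
    Admissible (rotate c p).1 (rotate c p).2 ↔ ∀ b : ℤ, c < b → b < c + k →
      b - heightCount p.1 p.2 (b - 1) ≤ c - heightCount p.1 p.2 (c - 1) := by
  simp only [admissible_iff_le_heightCount, heightCount_rotate]
  constructor
  · intro H b hb₁ hb₂
    have hi := H ⟨(b - c - 1).toNat, by omega⟩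
    rw [show (((b - c - 1).toNat : ℕ) : ℤ) + c = b - 1 by omega] at hi
    simp only at hi
    omega
  · intro H i
    have hb := H (i + c + 1) (by omega) (by omega)
    rw [add_sub_cancel_right] at hb
    omega

theorem existsUnique_admissible_rotate (p : (Fin n → Fin k) × (Fin (k - 1) → Fin n)) :
    ∃! c : Fin k, Admissible (rotate c p).1 (rotate c p).2 := by
  simp_rw [admissible_rotate_iff]
  refine existsUnique_dominant k fun x => ?_
  rw [add_sub_right_comm x (k : ℤ) 1, heightCount_add_period, Fintype.card_fin,
    Nat.cast_sub (Nat.one_le_iff_ne_zero.2 (NeZero.ne k))]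
  ring

end Polyomino

/-- Fixed-point count for the action of `(σ, τ) ∈ S_n × S_{k-1}` on doubly
labelled parallelogram polyominoes with fixed sink of width `k` and height `n`
(encoded as pairs `(g, h)` with `g : Fin n → Fin k`, `h : Fin (k-1) → Fin n`,
whose weakly increasing rearrangement `h↑ = h ∘ Tuple.sort h` satisfies
`h↑ i < #{m : g m ≤ i}`): it equals `k^(c(σ)-1) * n^(c(τ))` where `c(σ)`, `c(τ)`
are the numbers of orbits of `σ` and `τ`. -/
theorem stmt8 (k n : ℕ) (hk : 1 ≤ k) (hn : 1 ≤ n) (σ : Equiv.Perm (Fin n))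
    (τ : Equiv.Perm (Fin (k - 1))) :
    Nat.card {p : (Fin n → Fin k) × (Fin (k - 1) → Fin n) //
        (∀ i : Fin (k - 1),
          ((p.2 ∘ Tuple.sort p.2) i : ℕ) <
            (Finset.univ.filter fun m : Fin n => (p.1 m : ℕ) ≤ (i : ℕ)).card) ∧
        p.1 ∘ σ = p.1 ∧ p.2 ∘ τ = p.2} =
      k ^ (Nat.card (MulAction.orbitRel.Quotient (Subgroup.zpowers σ) (Fin n)) - 1) *
        n ^ Nat.card (MulAction.orbitRel.Quotient (Subgroup.zpowers τ) (Fin (k - 1))) := by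
  have : NeZero k := ⟨by omega⟩
  have : NeZero n := ⟨by omega⟩
  have hcount := Nat.card_eq_mul_of_existsUnique rotate (P := fun p => Admissible p.1 p.2)
    (Q := fun p => p.1 ∘ σ = p.1 ∧ p.2 ∘ τ = p.2) (rotate_comp_perm_iff σ τ)
    existsUnique_admissible_rotate
  have hfixed : Nat.card {p : (Fin n → Fin k) × (Fin (k - 1) → Fin n) //
      p.1 ∘ σ = p.1 ∧ p.2 ∘ τ = p.2} =
      k ^ Nat.card (MulAction.orbitRel.Quotient (Subgroup.zpowers σ) (Fin n)) *
        n ^ Nat.card (MulAction.orbitRel.Quotient (Subgroup.zpowers τ) (Fin (k - 1))) := by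
    rw [Nat.card_congr (Equiv.subtypeProdEquivProd (p := fun g : Fin n → Fin k => g ∘ σ = g)
      (q := fun h : Fin (k - 1) → Fin n => h ∘ τ = h)), Nat.card_prod,
      Equiv.Perm.natCard_comp_eq_self, Equiv.Perm.natCard_comp_eq_self, Nat.card_fin, Nat.card_fin]
  have hσ : 0 < Nat.card (MulAction.orbitRel.Quotient (Subgroup.zpowers σ) (Fin n)) :=
    Nat.card_pos
  refine Nat.eq_of_mul_eq_mul_left (Nat.pos_of_neZero k) ?_
  rw [← mul_assoc, ← pow_succ', Nat.sub_add_cancel hσ, ← hfixed, hcount, Nat.card_fin]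
  rfl
end

section
/- Fix natural numbers k ≥ 1, n ≥ 1 and r ≥ 1. Let T be the set of functions A : Fin r → Fin k → Fin (n+1) such that each row A s is weakly increasing, and columns are strictly increasing: A s i < A t i whenever s < t. Then |T| equals the determinant of the r×r integer matrix M whose (i,j) entry (for i, j ∈ Fin r) is C(n + k + j − i, k + j − i) when k + j ≥ i, and 0 otherwise. -/
/-!
This is the Lindström–Gessel–Viennot argument. Give every family of `r` lattice paths, path `u`
running from `(a u, 0)` to `(b (σ u), n)`, the sign of `σ`. The paths are chosen independently,
and there are `C(n + b - a, b - a)` of them from `(a, 0)` to `(b, n)`, so the signed count of all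
families is the determinant. Swapping the tails of two paths after a common point reverses the sign
and keeps, at every lattice point, the number of paths through it. So the common point, and the
pair of paths through it, may be picked by an arbitrary choice function and are picked again after
the swap: this is a sign-reversing involution on the intersecting families. The remaining
non-intersecting families have `σ = 1`, and for `a u = u`, `b u = k + u` they are exactly the
conjugates of the tableaux: path `s` crosses level `y` at `x = s + #{i | A s i ≥ n + 1 - y}`.
-/

open Finset Equiv
open scoped Classical

namespace LatticePath

section MonotoneMaps

lemma val_add_sub_le_of_strictMono {a M : ℕ} {f : Fin a → Fin M} (hf : StrictMono f)
    {i j : Fin a} (hij : i ≤ j) : (f i : ℕ) + (j - i) ≤ f j := by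
  have := card_le_card_of_injOn f (s := Ico i j) (t := Ico (f i) (f j))
    (fun x hx => by
      simp only [coe_Ico, Set.mem_Ico] at hx ⊢
      exact ⟨hf.monotone hx.1, hf hx.2⟩)
    hf.injective.injOn
  rw [Fin.card_Ico, Fin.card_Ico] at this
  have := Fin.le_def.1 (hf.monotone hij)
  omega

lemma val_le_of_strictMono {a M : ℕ} {f : Fin a → Fin M} (hf : StrictMono f) (i : Fin a) :
    (i : ℕ) ≤ f i ∧ (f i : ℕ) + a ≤ M + i := by
  obtain ⟨i, hi⟩ := i
  have h₀ := val_add_sub_le_of_strictMono hf (i := ⟨0, by omega⟩) (j := ⟨i, hi⟩)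
    (Fin.mk_le_mk.2 i.zero_le)
  have h₁ := val_add_sub_le_of_strictMono hf (i := ⟨i, hi⟩) (j := ⟨a - 1, by omega⟩)
    (Fin.mk_le_mk.2 (by omega))
  have := (f ⟨a - 1, by omega⟩).isLt
  simp only [Nat.sub_zero] at h₀ h₁ ⊢
  omega

def monotoneEquivStrictMono (a m : ℕ) :
    {g : Fin a → Fin (m + 1) // Monotone g} ≃ {h : Fin a → Fin (a + m) // StrictMono h} where
  toFun g := ⟨fun i => ⟨g.1 i + i, by omega⟩, fun i j hij => by
    have := g.2 hij.le
    simp only [Fin.lt_def, Fin.le_def] at *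
    omega⟩
  invFun h := ⟨fun i => ⟨h.1 i - i, by have := val_le_of_strictMono h.2 i; omega⟩,
    fun i j hij => by
      have := val_add_sub_le_of_strictMono h.2 hij
      simp only [Fin.le_def] at *
      omega⟩
  left_inv g := by ext i; simp
  right_inv h := by
    ext i
    have := val_le_of_strictMono h.2 i
    simp only
    omega

def strictMonoEquivFinset (a M : ℕ) :
    {h : Fin a → Fin M // StrictMono h} ≃ {s : Finset (Fin M) // #s = a} where
  toFun h := ⟨univ.map ⟨h.1, h.2.injective⟩, by simp⟩
  invFun s := ⟨s.1.orderEmbOfFin s.2, (s.1.orderEmbOfFin s.2).strictMono⟩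
  left_inv h := Subtype.ext (orderEmbOfFin_unique _ (by simp) h.2).symm
  right_inv s := Subtype.ext <| coe_injective <| by simp

lemma card_monotone (a m : ℕ) :
    Fintype.card {g : Fin a → Fin (m + 1) // Monotone g} = (a + m).choose a := by
  rw [Fintype.card_congr ((monotoneEquivStrictMono a m).trans (strictMonoEquivFinset a _)),
    Fintype.card_finset_len, Fintype.card_fin]

end MonotoneMaps

section Path

variable {n K : ℕ}

/-- The lattice path from `(a, 0)` to `(b, n)` that runs along level `y` from
`x = pathX a b v y` to `x = pathX a b v (y + 1)`; the `n` free corners are `v`. -/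
def pathX (a b : ℕ) (v : Fin n → Fin K) : ℕ → ℕ
  | 0 => a
  | y + 1 => if h : y < n then v ⟨y, h⟩ else b

variable {a b : ℕ} {v : Fin n → Fin K}

@[simp] lemma pathX_zero : pathX a b v 0 = a := rfl

lemma pathX_succ_of_lt {y : ℕ} (hy : y < n) : pathX a b v (y + 1) = v ⟨y, hy⟩ := dif_pos hy

@[simp] lemma pathX_succ (m : Fin n) : pathX a b v (m + 1) = v m := pathX_succ_of_lt m.isLt

lemma pathX_of_lt {y : ℕ} (hy : n < y) : pathX a b v y = b := by
  obtain ⟨y, rfl⟩ := Nat.exists_eq_add_one_of_ne_zero (show y ≠ 0 by omega)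
  simp [pathX, show ¬ y < n by omega]

lemma monotone_pathX_iff :
    Monotone (pathX a b v) ↔ a ≤ b ∧ Monotone v ∧ ∀ m, a ≤ v m ∧ (v m : ℕ) ≤ b := by
  constructor
  · intro h
    refine ⟨by simpa [pathX_of_lt] using h (Nat.zero_le (n + 1)), fun i j hij => ?_,
      fun m => ⟨by simpa using h (Nat.zero_le (m + 1)), ?_⟩⟩
    · simpa using h (Nat.succ_le_succ (Fin.le_def.1 hij))
    · simpa [pathX_of_lt] using h (show (m : ℕ) + 1 ≤ n + 1 by omega)
  · rintro ⟨hab, hv, hvab⟩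
    refine monotone_nat_of_le_succ fun y => ?_
    rcases y with _ | y <;> simp only [pathX] <;> split_ifs
    exacts [(hvab _).1, hab, hv (Fin.mk_le_mk.2 (by omega)), (hvab _).2, by omega, le_rfl]

def pathEquivMonotone (hab : a ≤ b) (hb : b < K) :
    {v : Fin n → Fin K // Monotone (pathX a b v)} ≃
      {g : Fin n → Fin (b - a + 1) // Monotone g} where
  toFun v := ⟨fun m => ⟨v.1 m - a, by have := (monotone_pathX_iff.1 v.2).2.2 m; omega⟩,
    fun i j hij => by
      have := (monotone_pathX_iff.1 v.2).2.1 hij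
      simp only [Fin.le_def] at *
      omega⟩
  invFun g := ⟨fun m => ⟨g.1 m + a, by have := (g.1 m).isLt; omega⟩,
    monotone_pathX_iff.2 ⟨hab, fun i j hij => by
      have := g.2 hij
      simp only [Fin.le_def] at *
      omega, fun m => by have := (g.1 m).isLt; simp only; omega⟩⟩
  left_inv v := by
    ext m
    have := (monotone_pathX_iff.1 v.2).2.2 m
    simp only
    omega
  right_inv g := by ext m; simp

lemma card_monotone_pathX (a b : ℕ) (hb : b < K) :
    #{v : Fin n → Fin K | Monotone (pathX a b v)} =
      if a ≤ b then (n + b - a).choose (b - a) else 0 := by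
  split_ifs with hab
  · rw [← Fintype.card_subtype, Fintype.card_congr (pathEquivMonotone hab hb), card_monotone,
      Nat.choose_symm_add, Nat.add_sub_assoc hab]
  · exact card_eq_zero.2 <| filter_false_of_mem fun v _ h => hab (monotone_pathX_iff.1 h).1

end Path

section Family

variable {r : ℕ} (X : Fin r → ℕ → ℕ)

/-- `q = (y, x)` stands for the lattice point `(x, y)`. -/
def visitors (q : ℕ × ℕ) : Set (Fin r) := {u | X u q.1 ≤ q.2 ∧ q.2 ≤ X u (q.1 + 1)}

def Intersecting : Prop := ∃ q, (visitors X q).Nontrivial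

def Separated : Prop := ∀ s t : Fin r, s < t → ∀ y, X s (y + 1) < X t y

def swapTails (y₀ : ℕ) (τ : Perm (Fin r)) : Fin r → ℕ → ℕ :=
  fun u y => if y ≤ y₀ then X u y else X (τ u) y

/- The choices are arbitrary: after the swap they are made again, by `meetPoint_swapTails` and
`meetSwap_swapTails`. -/
noncomputable def meetPoint : ℕ × ℕ := Classical.epsilon fun q => (visitors X q).Nontrivial

noncomputable def meetSwap : Perm (Fin r) :=
  Classical.epsilon fun τ => ∃ s ∈ visitors X (meetPoint X), ∃ t ∈ visitors X (meetPoint X),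
    s ≠ t ∧ τ = swap s t

variable {X}

lemma not_intersecting_of_separated (h : Separated X) : ¬ Intersecting X := by
  rintro ⟨⟨y, x⟩, s, hs, t, ht, hst⟩
  wlog hlt : s < t generalizing s t
  · exact this t ht s hs hst.symm (lt_of_le_of_ne (not_lt.1 hlt) hst.symm)
  have := h s t hlt y
  simp only [visitors, Set.mem_ofPred_eq] at hs ht
  omega

lemma separated_of_not_intersecting (hX : ∀ u, Monotone (X u)) (h₀ : Monotone fun u => X u 0)
    (h : ¬ Intersecting X) : Separated X := by
  have step {s t : Fin r} {y : ℕ} (hst : s ≠ t) (hle : X s y ≤ X t y) : X s (y + 1) < X t y := by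
    by_contra! hge
    exact h ⟨(y, X t y), s, ⟨hle, hge⟩, t, ⟨le_rfl, hX t y.le_succ⟩, hst⟩
  intro s t hst y
  induction y with
  | zero => exact step hst.ne (h₀ hst.le)
  | succ y ih => exact step hst.ne (ih.le.trans (hX t y.le_succ))

lemma monotone_swapTails (hX : ∀ u, Monotone (X u)) {y₀ : ℕ} {τ : Perm (Fin r)}
    (hτ : ∀ u, X u y₀ ≤ X (τ u) (y₀ + 1)) (u : Fin r) : Monotone (swapTails X y₀ τ u) := by
  refine monotone_nat_of_le_succ fun y => ?_
  simp only [swapTails]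
  split_ifs with h₁ h₂
  · exact hX u y.le_succ
  · obtain rfl : y = y₀ := by omega
    exact hτ u
  · omega
  · exact hX _ y.le_succ

section Swap

variable {q₀ : ℕ × ℕ} {s t : Fin r} (hs : s ∈ visitors X q₀) (ht : t ∈ visitors X q₀)
include hs ht

lemma le_swap_apply_succ (hX : ∀ u, Monotone (X u)) (u : Fin r) :
    X u q₀.1 ≤ X (swap s t u) (q₀.1 + 1) := by
  simp only [visitors, Set.mem_ofPred_eq] at hs ht
  rw [swap_apply_def]
  split_ifs <;> subst_vars
  exacts [by omega, by omega, hX u q₀.1.le_succ]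

lemma visitors_swapTails_of_le {q : ℕ × ℕ} (hq : q.1 < q₀.1 ∨ q.1 = q₀.1 ∧ q.2 ≤ q₀.2) :
    visitors (swapTails X q₀.1 (swap s t)) q = visitors X q := by
  ext u
  simp only [visitors, swapTails, Set.mem_ofPred_eq] at *
  rcases hq with hq | ⟨hq₁, hq₂⟩
  · rw [if_pos hq.le, if_pos (by omega)]
  · rw [if_pos hq₁.le, if_neg (by omega), hq₁, swap_apply_def]
    split_ifs <;> subst_vars <;> omega

lemma visitors_swapTails_of_ge {q : ℕ × ℕ} (hq : q₀.1 < q.1 ∨ q.1 = q₀.1 ∧ q₀.2 ≤ q.2) :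
    visitors (swapTails X q₀.1 (swap s t)) q = swap s t ⁻¹' visitors X q := by
  ext u
  simp only [visitors, swapTails, Set.mem_ofPred_eq, Set.mem_preimage] at *
  rcases hq with hq | ⟨hq₁, hq₂⟩
  · rw [if_neg (by omega), if_neg (by omega)]
  · rw [if_pos hq₁.le, if_neg (by omega), hq₁, swap_apply_def]
    split_ifs <;> subst_vars <;> omega

lemma nontrivial_visitors_swapTails_iff (q : ℕ × ℕ) :
    (visitors (swapTails X q₀.1 (swap s t)) q).Nontrivial ↔ (visitors X q).Nontrivial := by
  by_cases hq : q.1 < q₀.1 ∨ q.1 = q₀.1 ∧ q.2 ≤ q₀.2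
  · rw [visitors_swapTails_of_le hs ht hq]
  · rw [visitors_swapTails_of_ge hs ht (by omega), ← Equiv.image_symm_eq_preimage,
      Set.image_nontrivial (Equiv.injective _)]

end Swap

lemma nontrivial_visitors_meetPoint (h : Intersecting X) :
    (visitors X (meetPoint X)).Nontrivial :=
  Classical.epsilon_spec h

lemma exists_meetSwap_eq (h : Intersecting X) :
    ∃ s ∈ visitors X (meetPoint X), ∃ t ∈ visitors X (meetPoint X),
      s ≠ t ∧ meetSwap X = swap s t := by
  obtain ⟨s, hs, t, ht, hst⟩ := nontrivial_visitors_meetPoint h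
  exact Classical.epsilon_spec (p := fun τ => ∃ s ∈ visitors X (meetPoint X),
    ∃ t ∈ visitors X (meetPoint X), s ≠ t ∧ τ = swap s t) ⟨_, s, hs, t, ht, hst, rfl⟩

lemma meetPoint_congr {Y : Fin r → ℕ → ℕ}
    (h : ∀ q, (visitors Y q).Nontrivial ↔ (visitors X q).Nontrivial) :
    meetPoint Y = meetPoint X := by
  simp only [meetPoint, h]

lemma meetSwap_congr {Y : Fin r → ℕ → ℕ}
    (h : visitors Y (meetPoint Y) = visitors X (meetPoint X)) : meetSwap Y = meetSwap X := by
  simp only [meetSwap, h]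

variable (h : Intersecting X)
include h

lemma intersecting_swapTails : Intersecting (swapTails X (meetPoint X).1 (meetSwap X)) := by
  obtain ⟨s, hs, t, ht, -, hτ⟩ := exists_meetSwap_eq h
  obtain ⟨q, hq⟩ := h
  exact ⟨q, hτ ▸ (nontrivial_visitors_swapTails_iff hs ht q).2 hq⟩

lemma monotone_swapTails_meet (hX : ∀ u, Monotone (X u)) (u : Fin r) :
    Monotone (swapTails X (meetPoint X).1 (meetSwap X) u) := by
  obtain ⟨s, hs, t, ht, -, hτ⟩ := exists_meetSwap_eq h
  rw [hτ]
  exact monotone_swapTails hX (le_swap_apply_succ hs ht hX) u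

lemma meetPoint_swapTails :
    meetPoint (swapTails X (meetPoint X).1 (meetSwap X)) = meetPoint X := by
  obtain ⟨s, hs, t, ht, -, hτ⟩ := exists_meetSwap_eq h
  rw [hτ]
  exact meetPoint_congr (nontrivial_visitors_swapTails_iff hs ht)

lemma meetSwap_swapTails :
    meetSwap (swapTails X (meetPoint X).1 (meetSwap X)) = meetSwap X := by
  refine meetSwap_congr ?_
  obtain ⟨s, hs, t, ht, -, hτ⟩ := exists_meetSwap_eq h
  rw [meetPoint_swapTails h, hτ]
  exact visitors_swapTails_of_le hs ht (Or.inr ⟨rfl, le_rfl⟩)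

end Family

section System

variable {r n K : ℕ} (a b : Fin r → ℕ)

def pathFamily (σ : Perm (Fin r)) (V : Fin r → Fin n → Fin K) : Fin r → ℕ → ℕ :=
  fun u => pathX (a u) (b (σ u)) (V u)

def IsPathSystem (σ : Perm (Fin r)) (V : Fin r → Fin n → Fin K) : Prop :=
  ∀ u, Monotone (pathFamily a b σ V u)

noncomputable def tailSwap (p : Perm (Fin r) × (Fin r → Fin n → Fin K)) :
    Perm (Fin r) × (Fin r → Fin n → Fin K) :=
  let X := pathFamily a b p.1 p.2
  (p.1 * meetSwap X, fun u m => p.2 (if (m : ℕ) < (meetPoint X).1 then u else meetSwap X u) m)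

variable {a b}

lemma fst_le_of_nontrivial_visitors (hb : Function.Injective b) {σ : Perm (Fin r)}
    {V : Fin r → Fin n → Fin K} {q : ℕ × ℕ} (h : (visitors (pathFamily a b σ V) q).Nontrivial) :
    q.1 ≤ n := by
  by_contra! hq
  obtain ⟨s, hs, t, ht, hst⟩ := h
  simp only [visitors, pathFamily, pathX_of_lt hq, pathX_of_lt (hq.trans q.1.lt_succ_self),
    Set.mem_ofPred_eq] at hs ht
  exact hst (σ.injective (hb (by omega)))

lemma pathFamily_mul_eq_swapTails {σ τ : Perm (Fin r)} {V : Fin r → Fin n → Fin K} {y₀ : ℕ}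
    (hy₀ : y₀ ≤ n) :
    pathFamily a b (σ * τ) (fun u m => V (if (m : ℕ) < y₀ then u else τ u) m) =
      swapTails (pathFamily a b σ V) y₀ τ := by
  funext u y
  simp only [pathFamily, swapTails]
  rcases y with _ | y
  · simp
  · by_cases hy : y < n
    · simp only [pathX_succ_of_lt hy]
      split_ifs <;> first | rfl | omega
    · simp only [pathX_of_lt (show n < y + 1 by omega), if_neg (show ¬ y + 1 ≤ y₀ by omega),
        Perm.mul_apply]

variable {p : Perm (Fin r) × (Fin r → Fin n → Fin K)}

lemma pathFamily_tailSwap (hb : Function.Injective b) (h : Intersecting (pathFamily a b p.1 p.2)) :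
    pathFamily a b (tailSwap a b p).1 (tailSwap a b p).2 =
      swapTails (pathFamily a b p.1 p.2) (meetPoint (pathFamily a b p.1 p.2)).1
        (meetSwap (pathFamily a b p.1 p.2)) :=
  pathFamily_mul_eq_swapTails (fst_le_of_nontrivial_visitors hb (nontrivial_visitors_meetPoint h))

lemma tailSwap_eq {Y : Fin r → ℕ → ℕ} (hY : pathFamily a b p.1 p.2 = Y) :
    tailSwap a b p = (p.1 * meetSwap Y,
      fun u (m : Fin n) => p.2 (if (m : ℕ) < (meetPoint Y).1 then u else meetSwap Y u) m) := by
  subst hY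
  rfl

lemma tailSwap_tailSwap (hb : Function.Injective b) (h : Intersecting (pathFamily a b p.1 p.2)) :
    tailSwap a b (tailSwap a b p) = p := by
  rw [tailSwap_eq (pathFamily_tailSwap hb h), meetSwap_swapTails h, meetPoint_swapTails h,
    tailSwap_eq rfl]
  obtain ⟨s, -, t, -, -, hτ⟩ := exists_meetSwap_eq h
  simp only [hτ, mul_assoc, swap_mul_self, mul_one]
  refine Prod.ext rfl (funext fun u => funext fun m => ?_)
  dsimp only
  split_ifs <;> simp

lemma sign_tailSwap (h : Intersecting (pathFamily a b p.1 p.2)) :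
    Perm.sign (tailSwap a b p).1 = - Perm.sign p.1 := by
  obtain ⟨s, -, t, -, hst, hτ⟩ := exists_meetSwap_eq h
  simp [tailSwap, hτ, Perm.sign_swap hst]

lemma tailSwap_ne (h : Intersecting (pathFamily a b p.1 p.2)) : tailSwap a b p ≠ p := by
  obtain ⟨s, -, t, -, hst, hτ⟩ := exists_meetSwap_eq h
  intro heq
  have := congrArg Prod.fst heq
  simp only [tailSwap, hτ, mul_eq_left, swap_eq_one_iff] at this
  exact hst this

lemma isPathSystem_tailSwap (hb : Function.Injective b) (hp : IsPathSystem a b p.1 p.2)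
    (h : Intersecting (pathFamily a b p.1 p.2)) :
    IsPathSystem a b (tailSwap a b p).1 (tailSwap a b p).2 ∧
      Intersecting (pathFamily a b (tailSwap a b p).1 (tailSwap a b p).2) := by
  rw [IsPathSystem, pathFamily_tailSwap hb h]
  exact ⟨monotone_swapTails_meet h hp, intersecting_swapTails h⟩

end System

section LGV

def lgvMatrix {r : ℕ} (n : ℕ) (a b : Fin r → ℕ) : Matrix (Fin r) (Fin r) ℤ :=
  Matrix.of fun i j => if a i ≤ b j then ((n + b j - a i).choose (b j - a i) : ℤ) else 0

variable {r n K : ℕ} {a b : Fin r → ℕ}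

lemma card_isPathSystem (hK : ∀ j, b j < K) (σ : Perm (Fin r)) :
    #{V : Fin r → Fin n → Fin K | IsPathSystem a b σ V} =
      ∏ u, if a u ≤ b (σ u) then (n + b (σ u) - a u).choose (b (σ u) - a u) else 0 := by
  have : univ.filter (fun V : Fin r → Fin n → Fin K => IsPathSystem a b σ V) =
      Fintype.piFinset fun u => univ.filter fun v => Monotone (pathX (a u) (b (σ u)) v) := by
    ext V
    simp only [mem_filter, mem_univ, true_and, Fintype.mem_piFinset]
    rfl
  rw [this, Fintype.card_piFinset]
  exact prod_congr rfl fun u _ => card_monotone_pathX _ _ (hK _)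

lemma det_lgvMatrix_eq_sum_sign (hK : ∀ j, b j < K) :
    (lgvMatrix n a b).det = ∑ p ∈ univ.filter fun p : Perm (Fin r) × (Fin r → Fin n → Fin K) =>
      IsPathSystem a b p.1 p.2, (Perm.sign p.1 : ℤ) := by
  rw [← Matrix.det_transpose, Matrix.det_apply, sum_filter, Fintype.sum_prod_type]
  refine sum_congr rfl fun σ _ => ?_
  rw [← sum_filter]
  simp only [sum_const, card_isPathSystem hK σ, lgvMatrix, Matrix.transpose_apply,
    Matrix.of_apply, Units.smul_def, zsmul_eq_mul, nsmul_eq_mul, Nat.cast_prod, Nat.cast_ite,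
    Nat.cast_zero, Int.cast_id, mul_comm]

lemma sum_sign_intersecting_eq_zero (hb : Function.Injective b) :
    ∑ p ∈ univ.filter fun p : Perm (Fin r) × (Fin r → Fin n → Fin K) =>
      IsPathSystem a b p.1 p.2 ∧ Intersecting (pathFamily a b p.1 p.2),
      (Perm.sign p.1 : ℤ) = 0 := by
  refine sum_involution (fun p _ => tailSwap a b p) (fun p hp => ?_)
    (fun p hp _ => tailSwap_ne (mem_filter.1 hp).2.2)
    (fun p hp => mem_filter.2 ⟨mem_univ _, isPathSystem_tailSwap hb (mem_filter.1 hp).2.1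
      (mem_filter.1 hp).2.2⟩)
    (fun p hp => tailSwap_tailSwap hb (mem_filter.1 hp).2.2)
  rw [sign_tailSwap (mem_filter.1 hp).2.2, Units.val_neg, add_neg_cancel]

lemma eq_one_of_separated (hb : StrictMono b) {σ : Perm (Fin r)} {V : Fin r → Fin n → Fin K}
    (h : Separated (pathFamily a b σ V)) : σ = 1 := by
  have hσ : StrictMono σ := fun s t hst => hb.lt_iff_lt.1 <| by
    simpa [pathFamily, pathX_of_lt] using h s t hst (n + 1)
  exact Equiv.ext fun u => hσ.apply_eq

lemma not_intersecting_iff (ha : Monotone a) (hb : StrictMono b) {σ : Perm (Fin r)}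
    {V : Fin r → Fin n → Fin K} (hV : IsPathSystem a b σ V) :
    ¬ Intersecting (pathFamily a b σ V) ↔ σ = 1 ∧ Separated (pathFamily a b σ V) := by
  refine ⟨fun h => ?_, fun h => not_intersecting_of_separated h.2⟩
  have hsep := separated_of_not_intersecting hV
    (fun s t hst => by simpa [pathFamily] using ha hst) h
  exact ⟨eq_one_of_separated hb hsep, hsep⟩

lemma sum_sign_not_intersecting (ha : Monotone a) (hb : StrictMono b) :
    ∑ p ∈ univ.filter fun p : Perm (Fin r) × (Fin r → Fin n → Fin K) =>
      IsPathSystem a b p.1 p.2 ∧ ¬ Intersecting (pathFamily a b p.1 p.2), (Perm.sign p.1 : ℤ) =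
      #{V : Fin r → Fin n → Fin K | IsPathSystem a b 1 V ∧ Separated (pathFamily a b 1 V)} := by
  have key {p : Perm (Fin r) × (Fin r → Fin n → Fin K)}
      (hp : IsPathSystem a b p.1 p.2 ∧ ¬ Intersecting (pathFamily a b p.1 p.2)) :
      p.1 = 1 ∧ IsPathSystem a b 1 p.2 ∧ Separated (pathFamily a b 1 p.2) := by
    obtain ⟨σ, V⟩ := p
    obtain ⟨rfl, hsep⟩ := (not_intersecting_iff ha hb hp.1).1 hp.2
    exact ⟨rfl, hp.1, hsep⟩
  rw [card_eq_sum_ones, Nat.cast_sum]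
  refine sum_nbij' Prod.snd (Prod.mk 1)
    (fun p hp => mem_filter.2 ⟨mem_univ _, (key (mem_filter.1 hp).2).2⟩)
    (fun V hV => mem_filter.2 ⟨mem_univ _, (mem_filter.1 hV).2.1,
      (not_intersecting_iff ha hb (mem_filter.1 hV).2.1).2 ⟨rfl, (mem_filter.1 hV).2.2⟩⟩)
    (fun p hp => Prod.ext (key (mem_filter.1 hp).2).1.symm rfl) (fun V _ => rfl)
    (fun p hp => by simp [(key (mem_filter.1 hp).2).1])

theorem det_lgvMatrix (ha : Monotone a) (hb : StrictMono b) (hK : ∀ j, b j < K) :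
    (lgvMatrix n a b).det =
      #{V : Fin r → Fin n → Fin K | IsPathSystem a b 1 V ∧ Separated (pathFamily a b 1 V)} := by
  rw [det_lgvMatrix_eq_sum_sign hK, ← sum_filter_add_sum_filter_not _
      fun p => Intersecting (pathFamily a b p.1 p.2), filter_filter, filter_filter,
    sum_sign_intersecting_eq_zero hb.injective, zero_add, sum_sign_not_intersecting ha hb]

end LGV

section Tableau

lemma sub_le_card_filter_iff {N : ℕ} {p : Fin N → Prop} [DecidablePred p] (hp : Monotone p)
    (i : Fin N) : N - i ≤ #{j | p j} ↔ p i := by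
  constructor
  · intro h
    by_contra hi
    have hsub : ({j | p j} : Finset (Fin N)) ⊆ Ioi i := fun j hj => by
      simp only [mem_filter, mem_univ, true_and, mem_Ioi] at hj ⊢
      exact lt_of_not_ge fun hji => hi (hp hji hj)
    have := card_le_card hsub
    rw [Fin.card_Ioi] at this
    omega
  · intro hi
    have hsub : Ici i ⊆ ({j | p j} : Finset (Fin N)) := fun j hj => by
      simp only [mem_filter, mem_univ, true_and, mem_Ici] at hj ⊢
      exact hp hj hi
    simpa using card_le_card hsub

lemma card_filter_le_val (N c : ℕ) : #{j : Fin N | c ≤ (j : ℕ)} = N - c := by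
  have := card_filter_add_card_filter_not (s := univ) fun j : Fin N => (j : ℕ) < c
  simp only [not_lt, card_univ, Fintype.card_fin, Fin.card_filter_val_lt] at this
  omega

lemma monotone_le_add {ι : Type*} [Preorder ι] {f : ι → ℕ} (hf : Monotone f) (c d : ℕ) :
    Monotone fun j => d ≤ f j + c :=
  fun _ _ h hj => hj.trans (Nat.add_le_add_right (hf h) c)

lemma strictMono_of_lt_of_val_eq_succ {r : ℕ} {α : Type*} [Preorder α] {f : Fin r → α}
    (h : ∀ s t : Fin r, (t : ℕ) = s + 1 → f s < f t) : StrictMono f := by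
  cases r with
  | zero => exact fun s => s.elim0
  | succ r => exact Fin.strictMono_iff_lt_succ.2 fun i => h _ _ (by simp)

variable {k n r : ℕ}

def ofTableau (A : Fin r → Fin k → Fin (n + 1)) : Fin r → Fin n → Fin (k + r) :=
  fun s m => ⟨s + #{i | n ≤ (A s i : ℕ) + m}, by
    have := card_filter_le (univ : Finset (Fin k)) fun i => n ≤ (A s i : ℕ) + m
    rw [card_univ, Fintype.card_fin] at this
    omega⟩

def toTableau (V : Fin r → Fin n → Fin (k + r)) : Fin r → Fin k → Fin (n + 1) :=
  fun s i => ⟨#{m | (s : ℕ) + k ≤ V s m + i}, by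
    have := card_filter_le (univ : Finset (Fin n)) fun m => (s : ℕ) + k ≤ V s m + i
    rw [card_univ, Fintype.card_fin] at this
    omega⟩

lemma pathFamily_ofTableau (A : Fin r → Fin k → Fin (n + 1)) (s : Fin r) (y : ℕ) :
    pathFamily Fin.val (k + ·) 1 (ofTableau A) s y = s + #{i | n + 1 ≤ (A s i : ℕ) + y} := by
  simp only [pathFamily]
  rcases y with _ | y
  · rw [pathX_zero, left_eq_add, card_eq_zero, filter_eq_empty_iff]
    exact fun i _ => by have := (A s i).isLt; omega
  · by_cases hy : y < n
    · rw [pathX_succ_of_lt hy]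
      simp only [ofTableau, ← add_assoc, Nat.add_le_add_iff_right]
    · rw [pathX_of_lt (by omega), filter_true_of_mem fun i _ => by omega, card_univ,
        Fintype.card_fin, Perm.one_apply, add_comm]

lemma isPathSystem_ofTableau (A : Fin r → Fin k → Fin (n + 1)) :
    IsPathSystem Fin.val (k + ·) 1 (ofTableau A) := by
  intro u y y' h
  simp only [pathFamily_ofTableau]
  exact Nat.add_le_add_left (card_le_card (monotone_filter_right _
    fun i _ hi => hi.trans (Nat.add_le_add_left h _))) _

lemma separated_ofTableau {A : Fin r → Fin k → Fin (n + 1)}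
    (hA : ∀ (s t : Fin r) (i : Fin k), s < t → A s i < A t i) :
    Separated (pathFamily Fin.val (k + ·) 1 (ofTableau A)) := by
  intro s t hst y
  simp only [pathFamily_ofTableau]
  have : #{i | n + 1 ≤ (A s i : ℕ) + (y + 1)} ≤ #{i | n + 1 ≤ (A t i : ℕ) + y} :=
    card_le_card <| monotone_filter_right _ fun i _ hi => by
      have := Fin.lt_def.1 (hA s t i hst)
      omega
  have := Fin.lt_def.1 hst
  omega

lemma toTableau_ofTableau {A : Fin r → Fin k → Fin (n + 1)} (hA : ∀ s, Monotone (A s)) :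
    toTableau (ofTableau A) = A := by
  funext s i
  ext
  have key (m : Fin n) : (s : ℕ) + k ≤ (ofTableau A s m : ℕ) + i ↔ n ≤ (A s i : ℕ) + m := by
    rw [← sub_le_card_filter_iff (p := fun j => n ≤ (A s j : ℕ) + m)
      (monotone_le_add (fun _ _ h => hA s h) _ _) i]
    simp only [ofTableau]
    omega
  simp only [toTableau, key]
  rw [filter_congr fun (m : Fin n) _ => show n ≤ (A s i : ℕ) + m ↔ n - A s i ≤ (m : ℕ) by omega,
    card_filter_le_val]
  have := (A s i).isLt
  omega

lemma ofTableau_toTableau {V : Fin r → Fin n → Fin (k + r)}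
    (hV : IsPathSystem Fin.val (k + ·) 1 V) : ofTableau (toTableau V) = V := by
  funext s m
  ext
  obtain ⟨-, hmono, hbd⟩ := monotone_pathX_iff.1 (hV s)
  have key (i : Fin k) : n ≤ (toTableau V s i : ℕ) + m ↔ (s : ℕ) + k ≤ V s m + i := by
    rw [← sub_le_card_filter_iff (p := fun m' => (s : ℕ) + k ≤ V s m' + i)
      (monotone_le_add (fun _ _ h => hmono h) _ _) m]
    simp only [toTableau]
    omega
  simp only [ofTableau, key]
  rw [filter_congr fun (i : Fin k) _ =>
      show (s : ℕ) + k ≤ V s m + i ↔ s + k - V s m ≤ (i : ℕ) by omega,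
    card_filter_le_val]
  have := hbd m
  simp only [Perm.one_apply] at this
  omega

lemma monotone_toTableau (V : Fin r → Fin n → Fin (k + r)) (s : Fin r) :
    Monotone (toTableau V s) := fun i j h => by
  simp only [toTableau, Fin.mk_le_mk]
  exact card_le_card <| monotone_filter_right _ fun m _ hm => hm.trans (Nat.add_le_add_left h _)

lemma lt_of_separated_ofTableau {A : Fin r → Fin k → Fin (n + 1)} (hA : ∀ s, Monotone (A s))
    (hsep : Separated (pathFamily Fin.val (k + ·) 1 (ofTableau A)))
    {s t : Fin r} (hst : (t : ℕ) = s + 1) (i : Fin k) : A s i < A t i := by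
  have h := hsep s t (Fin.lt_def.2 (by omega)) (n - A s i)
  simp only [pathFamily_ofTableau] at h
  have hs := (sub_le_card_filter_iff (p := fun j => n + 1 ≤ (A s j : ℕ) + (n - A s i + 1))
    (monotone_le_add (fun _ _ h => hA s h) _ _) i).2 (by omega)
  have ht := (sub_le_card_filter_iff (p := fun j => n + 1 ≤ (A t j : ℕ) + (n - A s i))
    (monotone_le_add (fun _ _ h => hA t h) _ _) i).1 (by omega)
  rw [Fin.lt_def]
  omega

def tableauEquiv :
    {A : Fin r → Fin k → Fin (n + 1) //
        (∀ s, Monotone (A s)) ∧ ∀ (s t : Fin r) (i : Fin k), s < t → A s i < A t i} ≃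
      {V : Fin r → Fin n → Fin (k + r) //
        IsPathSystem Fin.val (k + ·) 1 V ∧ Separated (pathFamily Fin.val (k + ·) 1 V)} where
  toFun A := ⟨ofTableau A.1, isPathSystem_ofTableau A.1, separated_ofTableau A.2.2⟩
  invFun V := ⟨toTableau V.1, monotone_toTableau V.1, fun s t i hst => by
    have hsep := V.2.2
    rw [← ofTableau_toTableau V.2.1] at hsep
    exact strictMono_of_lt_of_val_eq_succ (f := fun s => toTableau V.1 s i)
      (fun s t hst => lt_of_separated_ofTableau (monotone_toTableau V.1) hsep hst i) hst⟩
  left_inv A := Subtype.ext (toTableau_ofTableau A.2.1)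
  right_inv V := Subtype.ext (ofTableau_toTableau V.2.1)

end Tableau

end LatticePath

theorem stmt13_general (k n r : ℕ) :
    (Nat.card {A : Fin r → Fin k → Fin (n + 1) //
        (∀ s, Monotone (A s)) ∧
          ∀ (s t : Fin r) (i : Fin k), s < t → A s i < A t i} : ℤ) =
      Matrix.det (Matrix.of fun i j : Fin r =>
        if (i : ℕ) ≤ k + (j : ℕ) then
          (Nat.choose (n + k + (j : ℕ) - (i : ℕ)) (k + (j : ℕ) - (i : ℕ)) : ℤ)
        else 0) := by
  rw [Nat.card_congr LatticePath.tableauEquiv, Nat.card_eq_fintype_card, Fintype.card_subtype,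
    ← LatticePath.det_lgvMatrix Fin.val_strictMono.monotone (fun _ _ h => Nat.add_lt_add_left h k)
      (fun j => by omega)]
  simp only [LatticePath.lgvMatrix, add_assoc]

/-- The number of families of `r` mutually non-crossing north-east lattice paths
(equivalently, semistandard tableaux of rectangular shape `k^r` with entries in
`{0,…,n}`), encoded as `A : Fin r → Fin k → Fin (n+1)` with weakly increasing
rows and strictly increasing columns, equals the `r×r` Lindström–Gessel–Viennot
determinant with entries `C(n+k+j−i, k+j−i)` (and `0` when `k+j < i`). -/
theorem stmt13 (k n r : ℕ) (hk : 1 ≤ k) (hn : 1 ≤ n) (hr : 1 ≤ r) :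
    (Nat.card {A : Fin r → Fin k → Fin (n + 1) //
        (∀ s, Monotone (A s)) ∧
          ∀ (s t : Fin r) (i : Fin k), s < t → A s i < A t i} : ℤ) =
      Matrix.det (Matrix.of fun i j : Fin r =>
        if (i : ℕ) ≤ k + (j : ℕ) then
          (Nat.choose (n + k + (j : ℕ) - (i : ℕ)) (k + (j : ℕ) - (i : ℕ)) : ℤ)
        else 0) :=
  stmt13_general k n r
end
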